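/- arXiv:cs/0609045 — 3 statements merged into one kernel-verified Lean document; each statement's English description precedes it below -/
import Mathlib

section
/- There is a universal constant C > 0 with the following property. Let X be a compact metric space and let 𝓕 be a compact subset of C(X) such that L := limsup_{ε→0} H_ε(𝓕) / log₂(1/ε) satisfies L ∈ (0, ∞), where H_ε(𝓕) is the metric entropy of 𝓕 in the sup-norm metric. There exists a prediction strategy that guarantees, for every sequence of signals x₁, x₂, … ∈ X and observations y₁, y₂, … ∈ [−1, 1]: for all sufficiently large N and all F ∈ 𝓕, Σ_{n=1}^N (yₙ − μₙ)² ≤ Σ_{n=1}^N (yₙ − F(xₙ))² + C·L·log₂ N. -/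
open scoped BigOperators

universe u

/-- Given a prediction strategy `σ` and sequences of signals `x` and observations `y`,
`preds σ x y n` is the prediction output on round `n`. -/
noncomputable def preds {X P : Type*} (σ : List (X × P) → X → P)
    (x : ℕ → X) (y : ℕ → P) (n : ℕ) : P :=
  σ ((List.range n).map fun i => (x i, y i)) (x n)

/-- The minimal number of points of `A` forming an `ε`-net for `A`. -/
noncomputable def coveringNumber {E : Type*} [MetricSpace E] (A : Set E) (ε : ℝ) : ℕ :=
  sInf {n : ℕ | ∃ S : Finset E, ↑S ⊆ A ∧ S.card = n ∧ ∀ a ∈ A, ∃ b ∈ S, dist a b ≤ ε}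

/-- Metric entropy: binary logarithm of the minimal size of an `ε`-net. -/
noncomputable def metricEntropy {E : Type*} [MetricSpace E] (A : Set E) (ε : ℝ) : ℝ :=
  Real.logb 2 (coveringNumber A ε)


private lemma hasDerivAt_gexp (y t : ℝ) :
    HasDerivAt (fun s => Real.exp (-(y-s)^2/8)) ((y-t)/4 * Real.exp (-(y-t)^2/8)) t := by
  have h1 : HasDerivAt (fun s : ℝ => -(y-s)^2/8) ((y-t)/4) t := by
    have h0 : HasDerivAt (fun s : ℝ => y - s) (-1) t := (hasDerivAt_id t).const_sub y
    have := ((h0.pow 2).neg).div_const 8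
    exact this.congr_deriv (by ring)
  have := h1.exp
  convert this using 1
  ring

private lemma hasDerivAt_g1 (y t : ℝ) :
    HasDerivAt (fun s => (y-s)/4 * Real.exp (-(y-s)^2/8))
      (Real.exp (-(y-t)^2/8) * ((y-t)^2/16 - 1/4)) t := by
  have h0 : HasDerivAt (fun s : ℝ => (y - s)/4) (-(1/4)) t := by
    have := ((hasDerivAt_id t).const_sub y).div_const 4
    exact this.congr_deriv (by ring)
  have := h0.mul (hasDerivAt_gexp y t)
  exact this.congr_deriv (by ring)

private lemma g1_antitoneOn {y : ℝ} (hy : y ∈ Set.Icc (-1:ℝ) 1) :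
    AntitoneOn (fun s => (y-s)/4 * Real.exp (-(y-s)^2/8)) (Set.Icc (-1:ℝ) 1) := by
  apply antitoneOn_of_deriv_nonpos (convex_Icc _ _)
  · exact (Continuous.continuousOn (by continuity))
  · intro s _
    exact (hasDerivAt_g1 y s).differentiableAt.differentiableWithinAt
  · intro s hs
    rw [interior_Icc] at hs
    rw [(hasDerivAt_g1 y s).deriv]
    have h2 : (y - s)^2 ≤ 4 := by nlinarith [hy.1, hy.2, hs.1, hs.2]
    nlinarith [Real.exp_pos (-(y-s)^2/8)]

lemma tangent_line {y μ γ : ℝ} (hy : y ∈ Set.Icc (-1:ℝ) 1) (hμ : μ ∈ Set.Icc (-1:ℝ) 1)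
    (hγ : γ ∈ Set.Icc (-1:ℝ) 1) :
    Real.exp (-(y-γ)^2/8) ≤ Real.exp (-(y-μ)^2/8) + (y-μ)/4 * Real.exp (-(y-μ)^2/8) * (γ-μ) := by
  set c := (y-μ)/4 * Real.exp (-(y-μ)^2/8) with hc
  set φ : ℝ → ℝ := fun s => Real.exp (-(y-μ)^2/8) + c * (s-μ) - Real.exp (-(y-s)^2/8) with hφ
  have hdφ : ∀ s, HasDerivAt φ (c - (y-s)/4 * Real.exp (-(y-s)^2/8)) s := by
    intro s
    have h1 : HasDerivAt (fun s : ℝ => Real.exp (-(y-μ)^2/8) + c * (s-μ)) c s := by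
      have := (((hasDerivAt_id s).sub_const μ).const_mul c).const_add (Real.exp (-(y-μ)^2/8))
      exact this.congr_deriv (by ring)
    exact h1.sub (hasDerivAt_gexp y s)
  have hφμ : φ μ = 0 := by simp [hφ]
  have hcont : ∀ s : Set ℝ, ContinuousOn φ s := fun s =>
    (Continuous.continuousOn (by continuity))
  have key : 0 ≤ φ γ := by
    rcases le_total μ γ with h | h
    · have hmono : MonotoneOn φ (Set.Icc μ 1) := by
        apply monotoneOn_of_deriv_nonneg (convex_Icc _ _) (hcont _)
        · intro s _; exact (hdφ s).differentiableAt.differentiableWithinAt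
        · intro s hs
          rw [interior_Icc] at hs
          rw [(hdφ s).deriv, hc]
          have := g1_antitoneOn hy hμ (Set.mem_Icc.2 ⟨le_trans hμ.1 hs.1.le, hs.2.le⟩) hs.1.le
          simpa using this
      have := hmono (Set.mem_Icc.2 ⟨le_refl μ, hμ.2⟩) (Set.mem_Icc.2 ⟨h, hγ.2⟩) h
      rw [hφμ] at this; exact this
    · have hanti : AntitoneOn φ (Set.Icc (-1:ℝ) μ) := by
        apply antitoneOn_of_deriv_nonpos (convex_Icc _ _) (hcont _)
        · intro s _; exact (hdφ s).differentiableAt.differentiableWithinAt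
        · intro s hs
          rw [interior_Icc] at hs
          rw [(hdφ s).deriv, hc]
          have := g1_antitoneOn hy (Set.mem_Icc.2 ⟨hs.1.le, le_trans hs.2.le hμ.2⟩) hμ hs.2.le
          simpa using this
      have := hanti (Set.mem_Icc.2 ⟨hγ.1, h⟩) (Set.mem_Icc.2 ⟨hμ.1, le_refl μ⟩) h
      rw [hφμ] at this; exact this
  simp only [hφ] at key
  linarith

set_option linter.unusedSectionVars false

noncomputable def cumLoss {X ι : Type*} (e : ι → X → ℝ) (i : ι) (h : List (X × ℝ)) : ℝ :=
  (h.map fun p => (p.2 - e i p.1)^2).sum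

noncomputable def aggWt {X ι : Type*} (w : ι → ℝ) (e : ι → X → ℝ) (h : List (X × ℝ)) (i : ι) : ℝ :=
  w i * Real.exp (-(cumLoss e i h)/8)

noncomputable def aggPred {X ι : Type*} (w : ι → ℝ) (e : ι → X → ℝ)
    (h : List (X × ℝ)) (a : X) : ℝ :=
  (∑' i, aggWt w e h i * e i a) / (∑' i, aggWt w e h i)

section AGG

variable {X : Type u} {ι : Type*} [Nonempty ι] {w : ι → ℝ} {e : ι → X → ℝ}

lemma cumLoss_nonneg (e : ι → X → ℝ) (i : ι) (h : List (X × ℝ)) : 0 ≤ cumLoss e i h := by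
  apply List.sum_nonneg
  intro z hz
  simp only [List.mem_map] at hz
  obtain ⟨p, _, rfl⟩ := hz
  positivity

lemma aggWt_pos (hw : ∀ i, 0 < w i) (h : List (X × ℝ)) (i : ι) : 0 < aggWt w e h i :=
  mul_pos (hw i) (Real.exp_pos _)

lemma aggWt_le (hw : ∀ i, 0 < w i) (h : List (X × ℝ)) (i : ι) : aggWt w e h i ≤ w i := by
  have h1 : Real.exp (-(cumLoss e i h)/8) ≤ 1 := by
    rw [Real.exp_le_one_iff]
    have := cumLoss_nonneg e i h
    linarith
  calc aggWt w e h i = w i * Real.exp (-(cumLoss e i h)/8) := rfl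
    _ ≤ w i * 1 := by apply mul_le_mul_of_nonneg_left h1 (hw i).le
    _ = w i := mul_one _

lemma aggWt_summable (hw : ∀ i, 0 < w i) (hsum : Summable w) (h : List (X × ℝ)) :
    Summable (aggWt w e h) :=
  Summable.of_nonneg_of_le (fun i => (aggWt_pos hw h i).le) (aggWt_le hw h) hsum

lemma aggZ_pos (hw : ∀ i, 0 < w i) (hsum : Summable w) (h : List (X × ℝ)) :
    0 < ∑' i, aggWt w e h i := by
  obtain ⟨i⟩ := ‹Nonempty ι›
  exact Summable.tsum_pos (aggWt_summable hw hsum h) (fun j => (aggWt_pos hw h j).le) i (aggWt_pos hw h i)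

lemma aggWE_summable (hw : ∀ i, 0 < w i) (hsum : Summable w)
    (he : ∀ i a, e i a ∈ Set.Icc (-1:ℝ) 1) (h : List (X × ℝ)) (a : X) :
    Summable (fun i => aggWt w e h i * e i a) := by
  apply Summable.of_abs
  have hb : ∀ i, |aggWt w e h i * e i a| ≤ aggWt w e h i := by
    intro i
    rw [abs_mul, abs_of_pos (aggWt_pos hw h i)]
    calc aggWt w e h i * |e i a| ≤ aggWt w e h i * 1 := by
          apply mul_le_mul_of_nonneg_left _ (aggWt_pos hw h i).le
          exact abs_le.2 ⟨(he i a).1, (he i a).2⟩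
      _ = _ := mul_one _
  exact Summable.of_nonneg_of_le (fun i => abs_nonneg _) hb (aggWt_summable hw hsum h)

lemma aggPred_mem (hw : ∀ i, 0 < w i) (hsum : Summable w)
    (he : ∀ i a, e i a ∈ Set.Icc (-1:ℝ) 1) (h : List (X × ℝ)) (a : X) :
    aggPred w e h a ∈ Set.Icc (-1:ℝ) 1 := by
  have hZ := aggZ_pos (e := e) hw hsum h
  have hv := aggWt_summable (e := e) hw hsum h
  have hve := aggWE_summable hw hsum he h a
  have hub : ∑' i, aggWt w e h i * e i a ≤ ∑' i, aggWt w e h i := by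
    apply Summable.tsum_le_tsum _ hve hv
    intro i
    calc aggWt w e h i * e i a ≤ aggWt w e h i * 1 :=
          mul_le_mul_of_nonneg_left (he i a).2 (aggWt_pos hw h i).le
      _ = _ := mul_one _
  have hlb : -(∑' i, aggWt w e h i) ≤ ∑' i, aggWt w e h i * e i a := by
    rw [← tsum_neg]
    apply Summable.tsum_le_tsum _ hv.neg hve
    intro i
    have : aggWt w e h i * (-1) ≤ aggWt w e h i * e i a :=
      mul_le_mul_of_nonneg_left (he i a).1 (aggWt_pos hw h i).le
    linarith
  constructor
  · rw [aggPred, le_div_iff₀ hZ]; linarith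
  · rw [aggPred, div_le_one hZ]; linarith

/-- one-round potential inequality -/
lemma agg_step (hw : ∀ i, 0 < w i) (hsum : Summable w)
    (he : ∀ i a, e i a ∈ Set.Icc (-1:ℝ) 1) (h : List (X × ℝ)) (a : X) {y : ℝ}
    (hy : y ∈ Set.Icc (-1:ℝ) 1) :
    ∑' i, aggWt w e h i * Real.exp (-(y - e i a)^2/8) ≤
      (∑' i, aggWt w e h i) * Real.exp (-(y - aggPred w e h a)^2/8) := by
  have hZ := aggZ_pos (e := e) hw hsum h
  have hv := aggWt_summable (e := e) hw hsum h
  have hve := aggWE_summable hw hsum he h a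
  set μ := aggPred w e h a with hμdef
  have hμ : μ ∈ Set.Icc (-1:ℝ) 1 := aggPred_mem hw hsum he h a
  set K := Real.exp (-(y - μ)^2/8) with hK
  set c := (y - μ)/4 * Real.exp (-(y-μ)^2/8) with hc
  have hμZ : ∑' i, aggWt w e h i * e i a = μ * (∑' i, aggWt w e h i) := by
    rw [hμdef, aggPred, div_mul_cancel₀]
    exact hZ.ne'
  have hterm : ∀ i, aggWt w e h i * Real.exp (-(y - e i a)^2/8) ≤
      K * aggWt w e h i + c * (aggWt w e h i * e i a) - c * μ * aggWt w e h i := by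
    intro i
    have ht := tangent_line hy hμ (he i a)
    have := mul_le_mul_of_nonneg_left ht (aggWt_pos (e := e) hw h i).le
    calc aggWt w e h i * Real.exp (-(y - e i a)^2/8) ≤
        aggWt w e h i * (Real.exp (-(y-μ)^2/8) + (y-μ)/4 * Real.exp (-(y-μ)^2/8) * (e i a - μ)) :=
          this
      _ = K * aggWt w e h i + c * (aggWt w e h i * e i a) - c * μ * aggWt w e h i := by
          rw [hK, hc]; ring
  have hsumR : Summable (fun i => K * aggWt w e h i + c * (aggWt w e h i * e i a)
      - c * μ * aggWt w e h i) :=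
    ((hv.mul_left K).add (hve.mul_left c)).sub (hv.mul_left (c * μ))
  have hsumL : Summable (fun i => aggWt w e h i * Real.exp (-(y - e i a)^2/8)) := by
    apply Summable.of_nonneg_of_le
      (fun i => mul_nonneg (aggWt_pos (e := e) hw h i).le (Real.exp_pos _).le) _ hv
    intro i
    have h1 : Real.exp (-(y - e i a)^2/8) ≤ 1 := by
      rw [Real.exp_le_one_iff]; nlinarith [sq_nonneg (y - e i a)]
    calc aggWt w e h i * Real.exp (-(y - e i a)^2/8) ≤ aggWt w e h i * 1 :=
          mul_le_mul_of_nonneg_left h1 (aggWt_pos hw h i).le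
      _ = _ := mul_one _
  calc ∑' i, aggWt w e h i * Real.exp (-(y - e i a)^2/8)
      ≤ ∑' i, (K * aggWt w e h i + c * (aggWt w e h i * e i a) - c * μ * aggWt w e h i) :=
        Summable.tsum_le_tsum hterm hsumL hsumR
    _ = (K * ∑' i, aggWt w e h i) + c * (∑' i, aggWt w e h i * e i a)
          - c * μ * ∑' i, aggWt w e h i := by
        rw [Summable.tsum_sub ((hv.mul_left K).add (hve.mul_left c)) (hv.mul_left (c * μ)),
          Summable.tsum_add (hv.mul_left K) (hve.mul_left c), tsum_mul_left, tsum_mul_left, tsum_mul_left]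
    _ = (∑' i, aggWt w e h i) * K := by rw [hμZ]; ring

lemma hist_succ (x : ℕ → X) (y : ℕ → ℝ) (N : ℕ) :
    ((List.range (N+1)).map fun n => (x n, y n)) =
      ((List.range N).map fun n => (x n, y n)) ++ [(x N, y N)] := by
  rw [List.range_succ, List.map_append]; rfl

lemma cumLoss_append (i : ι) (h : List (X × ℝ)) (a : X) (b : ℝ) :
    cumLoss e i (h ++ [(a,b)]) = cumLoss e i h + (b - e i a)^2 := by
  simp [cumLoss]

lemma cumLoss_hist (i : ι) (x : ℕ → X) (y : ℕ → ℝ) (N : ℕ) :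
    cumLoss e i ((List.range N).map fun n => (x n, y n)) =
      ∑ n ∈ Finset.range N, (y n - e i (x n))^2 := by
  induction N with
  | zero => simp [cumLoss]
  | succ N ih => rw [hist_succ, cumLoss_append, ih, Finset.sum_range_succ]

lemma aggWt_append (h : List (X × ℝ)) (a : X) (b : ℝ) (i : ι) :
    aggWt w e (h ++ [(a,b)]) i = aggWt w e h i * Real.exp (-(b - e i a)^2/8) := by
  rw [aggWt, aggWt, cumLoss_append,
    show -(cumLoss e i h + (b - e i a)^2)/8 = -(cumLoss e i h)/8 + -(b - e i a)^2/8 by ring,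
    Real.exp_add]
  ring

lemma agg_telescope (hw : ∀ i, 0 < w i) (hsum : Summable w)
    (he : ∀ i a, e i a ∈ Set.Icc (-1:ℝ) 1)
    (x : ℕ → X) (y : ℕ → ℝ) (hy : ∀ n, y n ∈ Set.Icc (-1:ℝ) 1) (N : ℕ) :
    (∑' i, aggWt w e ((List.range N).map fun n => (x n, y n)) i) ≤
      (∑' i, w i) *
        Real.exp (-(∑ n ∈ Finset.range N, (y n - preds (aggPred w e) x y n)^2)/8) := by
  induction N with
  | zero => simp [aggWt, cumLoss]
  | succ N ih =>
    set h := (List.range N).map fun n => (x n, y n) with hh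
    have hstep := agg_step hw hsum he h (x N) (hy N)
    have heq : ∀ i, aggWt w e ((List.range (N+1)).map fun n => (x n, y n)) i
        = aggWt w e h i * Real.exp (-(y N - e i (x N))^2/8) := fun i => by
      rw [hist_succ, aggWt_append]
    rw [tsum_congr heq]
    have hμ : aggPred w e h (x N) = preds (aggPred w e) x y N := rfl
    calc ∑' i, aggWt w e h i * Real.exp (-(y N - e i (x N))^2/8)
        ≤ (∑' i, aggWt w e h i) *
            Real.exp (-(y N - preds (aggPred w e) x y N)^2/8) := by
          rw [← hμ]; exact hstep
      _ ≤ ((∑' i, w i) *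
            Real.exp (-(∑ n ∈ Finset.range N, (y n - preds (aggPred w e) x y n)^2)/8)) *
            Real.exp (-(y N - preds (aggPred w e) x y N)^2/8) :=
          mul_le_mul_of_nonneg_right ih (Real.exp_pos _).le
      _ = (∑' i, w i) *
            Real.exp (-(∑ n ∈ Finset.range (N+1), (y n - preds (aggPred w e) x y n)^2)/8) := by
          rw [Finset.sum_range_succ, mul_assoc, ← Real.exp_add]
          congr 1
          exact congrArg Real.exp (by ring)

lemma agg_main (hw : ∀ i, 0 < w i) (hsum : Summable w)
    (he : ∀ i a, e i a ∈ Set.Icc (-1:ℝ) 1)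
    (x : ℕ → X) (y : ℕ → ℝ) (hy : ∀ n, y n ∈ Set.Icc (-1:ℝ) 1) (N : ℕ) (i : ι) :
    ∑ n ∈ Finset.range N, (y n - preds (aggPred w e) x y n)^2 ≤
      ∑ n ∈ Finset.range N, (y n - e i (x n))^2
        + 8 * (Real.log (∑' j, w j) - Real.log (w i)) := by
  set P := ∑ n ∈ Finset.range N, (y n - preds (aggPred w e) x y n)^2 with hP
  set Λ := ∑ n ∈ Finset.range N, (y n - e i (x n))^2 with hΛ
  have hlow : w i * Real.exp (-Λ/8) ≤ (∑' j, w j) * Real.exp (-P/8) := by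
    have h1 : aggWt w e ((List.range N).map fun n => (x n, y n)) i ≤
        ∑' j, aggWt w e ((List.range N).map fun n => (x n, y n)) j :=
      Summable.le_tsum (aggWt_summable hw hsum _) i (fun j _ => (aggWt_pos hw _ j).le)
    have h2 := agg_telescope hw hsum he x y hy N
    calc w i * Real.exp (-Λ/8)
        = aggWt w e ((List.range N).map fun n => (x n, y n)) i := by
          rw [aggWt, cumLoss_hist]
      _ ≤ _ := h1
      _ ≤ _ := h2
  have l1 : Real.log (w i * Real.exp (-Λ/8)) = Real.log (w i) + (-Λ/8) := by
    rw [Real.log_mul (hw i).ne' (Real.exp_pos _).ne', Real.log_exp]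
  have l2 : Real.log ((∑' j, w j) * Real.exp (-P/8))
      = Real.log (∑' j, w j) + (-P/8) := by
    have hW0 : 0 < ∑' j, w j := Summable.tsum_pos hsum (fun j => (hw j).le) i (hw i)
    rw [Real.log_mul hW0.ne' (Real.exp_pos _).ne', Real.log_exp]
  have hlog := Real.log_le_log (mul_pos (hw i) (Real.exp_pos _)) hlow
  rw [l1, l2] at hlog
  linarith


end AGG


private lemma clip_sq {y t : ℝ} (hy : -1 ≤ y) (hy1 : y ≤ 1) :
    (y - max (-1) (min 1 t))^2 ≤ (y - t)^2 := by
  rcases le_total t 1 with h1 | h1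
  · rcases le_total (-1 : ℝ) t with h2 | h2
    · rw [min_eq_right h1, max_eq_right h2]
    · rw [min_eq_right h1, max_eq_left h2]
      nlinarith [mul_nonneg (by linarith : (0:ℝ) ≤ -t - 1) (by linarith : (0:ℝ) ≤ 2*y - t + 1)]
  · rw [min_eq_left h1, max_eq_right (by norm_num : (-1:ℝ) ≤ 1)]
    nlinarith [mul_nonneg (by linarith : (0:ℝ) ≤ t - 1) (by linarith : (0:ℝ) ≤ t + 1 - 2*y)]

private lemma clip_step {y t F ε B : ℝ} (hy : -1 ≤ y) (hy1 : y ≤ 1) (hB : |F| ≤ B)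
    (hd : |t - F| ≤ ε) (hε1 : ε ≤ 1) :
    (y - max (-1) (min 1 t))^2 ≤ (y - F)^2 + (2*B+3)*ε := by
  have h1 := clip_sq (t := t) hy hy1
  have hd' := abs_le.1 hd
  have hB' := abs_le.1 hB
  have hε0 : 0 ≤ ε := le_trans (abs_nonneg _) hd
  have key : (y - t)^2 ≤ (y - F)^2 + (2*B+3)*ε := by
    nlinarith [mul_nonneg (by linarith : (0:ℝ) ≤ (y - F) + (1 + B))
        (by linarith : (0:ℝ) ≤ ε + (t - F)),
      mul_nonneg (by linarith : (0:ℝ) ≤ (1 + B) - (y - F))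
        (by linarith : (0:ℝ) ≤ ε - (t - F)),
      mul_nonneg (by linarith : (0:ℝ) ≤ ε - (t - F)) (by linarith : (0:ℝ) ≤ ε + (t - F))]
  linarith

set_option maxHeartbeats 2000000 in
/-- Corollary 1: for a compact `𝓕 ⊆ C(X)` of "metric dimension"
`L = limsup_{ε→0} H_ε(𝓕)/log₂(1/ε) ∈ (0,∞)`, the regret is `O(L log N)`. -/
theorem stmt5 : ∃ C : ℝ, 0 < C ∧
    ∀ (X : Type u) [MetricSpace X] [CompactSpace X] (𝓕 : Set C(X, ℝ)) (L : ℝ),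
      IsCompact 𝓕 →
      Filter.IsBoundedUnder (· ≤ ·) (nhdsWithin 0 (Set.Ioi 0))
        (fun ε : ℝ => metricEntropy 𝓕 ε / Real.logb 2 (1 / ε)) →
      L = Filter.limsup (fun ε : ℝ => metricEntropy 𝓕 ε / Real.logb 2 (1 / ε))
            (nhdsWithin 0 (Set.Ioi 0)) →
      0 < L →
      ∃ σ : List (X × ℝ) → X → ℝ,
        ∀ x : ℕ → X, ∀ y : ℕ → ℝ, (∀ n, y n ∈ Set.Icc (-1 : ℝ) 1) →
          ∃ N₀ : ℕ, ∀ N ≥ N₀, ∀ F ∈ 𝓕,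
            ∑ n ∈ Finset.range N, (y n - preds σ x y n) ^ 2 ≤
              ∑ n ∈ Finset.range N, (y n - F (x n)) ^ 2 +
                C * L * Real.logb 2 N := by
  refine ⟨50, by norm_num, ?_⟩
  intro X _ _ 𝓕 L hcomp hbdd hLdef hLpos
  rcases Set.eq_empty_or_nonempty 𝓕 with hemp | hne
  · refine ⟨fun _ _ => 0, fun x y _ => ⟨0, fun N _ F hF => ?_⟩⟩
    rw [hemp] at hF
    exact absurd hF (Set.notMem_empty F)
  -- ε-nets with centers in 𝓕
  have hexists : ∀ ε : ℝ, 0 < ε → ∃ S : Finset C(X, ℝ), ↑S ⊆ 𝓕 ∧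
      ∀ a ∈ 𝓕, ∃ b ∈ S, dist a b ≤ ε := by
    intro ε hε
    have htb := hcomp.totallyBounded
    rw [totallyBounded_iff_subset] at htb
    obtain ⟨t, hts, htf, hcov⟩ := htb _ (Metric.dist_mem_uniformity hε)
    refine ⟨htf.toFinset, by simpa using hts, ?_⟩
    intro a ha
    obtain ⟨b, hbt, hab⟩ := Set.mem_iUnion₂.1 (hcov ha)
    exact ⟨b, htf.mem_toFinset.2 hbt, le_of_lt hab⟩
  have hnet : ∀ k : ℕ, ∃ S : Finset C(X, ℝ), ↑S ⊆ 𝓕 ∧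
      S.card = coveringNumber 𝓕 ((1/2) ^ k) ∧
      ∀ a ∈ 𝓕, ∃ b ∈ S, dist a b ≤ (1/2 : ℝ) ^ k := by
    intro k
    have h1 : coveringNumber 𝓕 ((1/2) ^ k) ∈ {n : ℕ | ∃ S : Finset C(X, ℝ), ↑S ⊆ 𝓕 ∧
        S.card = n ∧ ∀ a ∈ 𝓕, ∃ b ∈ S, dist a b ≤ (1/2 : ℝ) ^ k} := by
      apply Nat.sInf_mem
      obtain ⟨S, hS1, hS2⟩ := hexists ((1/2) ^ k) (by positivity)
      exact ⟨S.card, S, hS1, rfl, hS2⟩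
    exact h1
  choose T hT1 hTcard hTnet using hnet
  have hTpos : ∀ k, 0 < (T k).card := by
    intro k
    obtain ⟨F₀, hF₀⟩ := hne
    obtain ⟨b, hb, -⟩ := hTnet k F₀ hF₀
    exact Finset.card_pos.2 ⟨b, hb⟩
  haveI hι : Nonempty ((k : ℕ) × {f : C(X, ℝ) // f ∈ T k}) := by
    obtain ⟨b, hb⟩ := Finset.card_pos.1 (hTpos 0)
    exact ⟨⟨0, ⟨b, hb⟩⟩⟩
  set w : ((k : ℕ) × {f : C(X, ℝ) // f ∈ T k}) → ℝ :=
    fun i => 1 / (((i.1 : ℝ) + 1) ^ 2 * ((T i.1).card : ℝ)) with hwdef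
  have hw : ∀ i, 0 < w i := by
    intro i
    have h : (0:ℝ) < ((T i.1).card : ℝ) := Nat.cast_pos.2 (hTpos i.1)
    simp only [hwdef]
    positivity
  have hsum : Summable w := by
    apply (summable_sigma_of_nonneg (fun i => (hw i).le)).2
    constructor
    · intro k
      exact Summable.of_finite
    · have hval : ∀ k : ℕ, (∑' f : {f : C(X, ℝ) // f ∈ T k}, w ⟨k, f⟩)
          = 1 / ((k : ℝ) + 1) ^ 2 := by
        intro k
        rw [tsum_fintype]
        simp only [hwdef]
        rw [Finset.sum_const, Finset.card_univ, Fintype.card_coe, nsmul_eq_mul]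
        have h : (0:ℝ) < ((T k).card : ℝ) := Nat.cast_pos.2 (hTpos k)
        field_simp
      apply Summable.congr _ (fun k => (hval k).symm)
      have h1 : Summable (fun n : ℕ => 1 / (n : ℝ) ^ 2) :=
        Real.summable_one_div_nat_pow.2 one_lt_two
      have h2 := (summable_nat_add_iff 1).2 h1
      apply Summable.congr h2
      intro k
      push_cast
      ring
  set e : ((k : ℕ) × {f : C(X, ℝ) // f ∈ T k}) → X → ℝ :=
    fun i a => max (-1) (min 1 (i.2.1 a)) with hedef
  have he : ∀ i a, e i a ∈ Set.Icc (-1:ℝ) 1 :=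
    fun i a => ⟨le_max_left _ _, max_le (by norm_num) (min_le_left _ _)⟩
  refine ⟨aggPred w e, ?_⟩
  intro x y hy
  -- bound on functions in 𝓕
  obtain ⟨B₀, hB₀⟩ := hcomp.isBounded.subset_closedBall 0
  set B := max B₀ 0 with hBdef
  have hBnonneg : 0 ≤ B := le_max_right _ _
  have hFB : ∀ F ∈ 𝓕, ∀ a : X, |F a| ≤ B := by
    intro F hF a
    have h1 : ‖F‖ ≤ B₀ := by
      have := hB₀ hF
      rwa [Metric.mem_closedBall, dist_zero_right] at this
    calc |F a| = ‖F a‖ := rfl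
      _ ≤ ‖F‖ := F.norm_coe_le_norm a
      _ ≤ B := le_trans h1 (le_max_left _ _)
  -- eventual entropy bound
  have hev : ∀ᶠ ε in nhdsWithin 0 (Set.Ioi 0),
      metricEntropy 𝓕 ε / Real.logb 2 (1/ε) < 2*L := by
    apply Filter.eventually_lt_of_limsup_lt _ hbdd
    rw [← hLdef]; linarith
  obtain ⟨ε₀, hε₀pos, hε₀⟩ : ∃ ε₀, ε₀ ∈ Set.Ioi (0:ℝ) ∧ ∀ ε : ℝ, 0 < ε → ε < ε₀ →
      metricEntropy 𝓕 ε / Real.logb 2 (1/ε) < 2*L := by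
    rw [Filter.eventually_iff, mem_nhdsGT_iff_exists_Ioo_subset] at hev
    obtain ⟨u, hu, hsub⟩ := hev
    exact ⟨u, hu, fun ε h1 h2 => hsub ⟨h1, h2⟩⟩
  rw [Set.mem_Ioi] at hε₀pos
  have hlog2pos : (0:ℝ) < Real.log 2 := Real.log_pos one_lt_two
  have hcard : ∀ k : ℕ, 1 ≤ k → (1/2:ℝ) ^ k < ε₀ →
      Real.log ((T k).card : ℝ) ≤ 2*L*(k:ℝ)*Real.log 2 := by
    intro k hk hke
    have h1 := hε₀ ((1/2) ^ k) (by positivity) hke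
    have h2 : Real.logb 2 (1/((1/2:ℝ) ^ k)) = (k:ℝ) := by
      rw [show (1/((1/2:ℝ) ^ k)) = (2:ℝ) ^ k by
        rw [div_pow, one_pow, one_div, one_div, inv_inv]]
      rw [Real.logb_pow, Real.logb_self_eq_one one_lt_two, mul_one]
    rw [metricEntropy, h2] at h1
    have hcc : ((coveringNumber 𝓕 ((1/2:ℝ) ^ k)) : ℝ) = ((T k).card : ℝ) := by
      exact_mod_cast (hTcard k).symm
    rw [hcc] at h1
    have hkpos : (0:ℝ) < (k:ℝ) := by exact_mod_cast hk
    rw [div_lt_iff₀ hkpos] at h1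
    rw [Real.logb, div_lt_iff₀ hlog2pos] at h1
    linarith
  -- threshold k₁
  obtain ⟨k₀, hk₀⟩ := exists_pow_lt_of_lt_one hε₀pos (by norm_num : (1/2:ℝ) < 1)
  set k₁ := k₀ + 1 with hk₁def
  have hk₁ : ∀ k, k₁ ≤ k → 1 ≤ k ∧ (1/2:ℝ) ^ k < ε₀ := by
    intro k hk
    constructor
    · omega
    · refine lt_of_le_of_lt ?_ hk₀
      exact pow_le_pow_of_le_one (by norm_num) (by norm_num) (by omega)
  -- constants
  set W0 := ∑' j, w j with hW0def
  have hW0pos : 0 < W0 := Summable.tsum_pos hsum (fun j => (hw j).le) hι.some (hw hι.some)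
  set c₂ := (2*B+3) + 8*Real.log W0 + 16*Real.log 3 + 16*L with hc₂def
  set T₀ := max 1 (max ((32/(17*L)) ^ 2) (c₂/(17*L))) with hT₀def
  refine ⟨max (2 ^ k₁) (max 2 (⌈(2:ℝ) ^ T₀⌉₊ + 1)), ?_⟩
  intro N hN F hF
  have hNk₁ : 2 ^ k₁ ≤ N := le_trans (le_max_left _ _) hN
  have hN2 : 2 ≤ N := le_trans (le_trans (le_max_left 2 _) (le_max_right _ _)) hN
  have hNceil : ⌈(2:ℝ) ^ T₀⌉₊ + 1 ≤ N :=
    le_trans (le_trans (le_max_right 2 _) (le_max_right _ _)) hN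
  set k := Nat.clog 2 N with hkdef
  have hkk₁ : k₁ ≤ k := by
    calc k₁ = Nat.clog 2 (2 ^ k₁) := (Nat.clog_pow 2 k₁ one_lt_two).symm
      _ ≤ Nat.clog 2 N := Nat.clog_mono_right 2 hNk₁
  have hk1 : 1 ≤ k := (hk₁ k hkk₁).1
  set t := Real.logb 2 (N:ℝ) with htdef
  have ht_ge : T₀ ≤ t := by
    have h0 : ((⌈(2:ℝ) ^ T₀⌉₊ : ℕ) : ℝ) ≤ (N:ℝ) := by
      exact_mod_cast Nat.le_of_succ_le hNceil
    have h1 : (2:ℝ) ^ T₀ ≤ (N:ℝ) := le_trans (Nat.le_ceil _) h0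
    calc T₀ = Real.logb 2 ((2:ℝ) ^ T₀) :=
          (Real.logb_rpow (by norm_num) (by norm_num)).symm
      _ ≤ t := Real.logb_le_logb_of_le one_lt_two
          (Real.rpow_pos_of_pos (by norm_num) _) h1
  have ht1 : 1 ≤ t := le_trans (le_max_left _ _) ht_ge
  have htpos : 0 < t := lt_of_lt_of_le one_pos ht1
  have hkt : (k:ℝ) ≤ t + 1 := by
    have h1 : 2 ^ (k - 1) < N := Nat.pow_pred_clog_lt_self one_lt_two (by omega)
    have h2 : (2:ℝ) ^ (k - 1) < (N:ℝ) := by exact_mod_cast h1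
    have h3 : Real.logb 2 ((2:ℝ) ^ (k - 1)) ≤ t :=
      Real.logb_le_logb_of_le one_lt_two (by positivity) h2.le
    rw [Real.logb_pow, Real.logb_self_eq_one one_lt_two, mul_one] at h3
    have h4 : ((k - 1 : ℕ) : ℝ) = (k:ℝ) - 1 := by
      have : (1:ℕ) ≤ k := hk1
      push_cast [Nat.cast_sub this]
      ring
    rw [h4] at h3
    linarith
  -- net approximation of F
  obtain ⟨f, hfT, hfd⟩ := hTnet k F hF
  set i : ((k : ℕ) × {f : C(X, ℝ) // f ∈ T k}) := ⟨k, ⟨f, hfT⟩⟩ with hidef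
  have hmain := agg_main hw hsum he x y hy N i
  -- loss comparison with F
  have hΛ : ∑ n ∈ Finset.range N, (y n - e i (x n)) ^ 2 ≤
      (∑ n ∈ Finset.range N, (y n - F (x n)) ^ 2) + (2*B+3) := by
    have hterm : ∀ n ∈ Finset.range N, (y n - e i (x n)) ^ 2 ≤
        (y n - F (x n)) ^ 2 + (2*B+3)*(1/2:ℝ) ^ k := by
      intro n _
      have hdist : |f (x n) - F (x n)| ≤ (1/2:ℝ) ^ k := by
        calc |f (x n) - F (x n)| = dist (f (x n)) (F (x n)) := (Real.dist_eq _ _).symm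
          _ ≤ dist f F := ContinuousMap.dist_apply_le_dist _
          _ = dist F f := dist_comm _ _
          _ ≤ _ := hfd
      have hstep := clip_step (hy n).1 (hy n).2 (hFB F hF (x n)) hdist
        (pow_le_one₀ (by norm_num) (by norm_num))
      simpa only [hedef] using hstep
    calc ∑ n ∈ Finset.range N, (y n - e i (x n)) ^ 2
        ≤ ∑ n ∈ Finset.range N, ((y n - F (x n)) ^ 2 + (2*B+3)*(1/2:ℝ) ^ k) :=
          Finset.sum_le_sum hterm
      _ = (∑ n ∈ Finset.range N, (y n - F (x n)) ^ 2)
            + (N:ℝ) * ((2*B+3)*(1/2:ℝ) ^ k) := by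
          rw [Finset.sum_add_distrib, Finset.sum_const, Finset.card_range, nsmul_eq_mul]
      _ ≤ (∑ n ∈ Finset.range N, (y n - F (x n)) ^ 2) + (2*B+3) := by
          have hNle : (N:ℝ) ≤ 2 ^ k := by exact_mod_cast Nat.le_pow_clog one_lt_two N
          have hN2k : (N:ℝ) * (1/2:ℝ) ^ k ≤ 1 := by
            rw [div_pow, one_pow, mul_one_div, div_le_one (by positivity)]
            exact hNle
          have hB3 : (0:ℝ) ≤ 2*B+3 := by linarith
          have hm := mul_le_mul_of_nonneg_left hN2k hB3
          nlinarith [hm]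
  -- weight bound
  have hcardpos : (0:ℝ) < ((T k).card : ℝ) := Nat.cast_pos.2 (hTpos k)
  have hlogw : -Real.log (w i) ≤ 2*Real.log ((k:ℝ)+1) + 2*L*(k:ℝ)*Real.log 2 := by
    have hwi : w i = 1 / (((k : ℝ) + 1) ^ 2 * ((T k).card : ℝ)) := rfl
    rw [hwi, one_div, Real.log_inv, neg_neg,
      Real.log_mul (by positivity) hcardpos.ne', Real.log_pow]
    have hcb := hcard k hk1 (hk₁ k hkk₁).2
    push_cast
    linarith
  -- analytic bounds
  have hlogk : Real.log ((k:ℝ)+1) ≤ Real.log 3 + 2*Real.sqrt t := by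
    have h1 : (k:ℝ)+1 ≤ 3*t := by linarith
    have h2 : Real.log ((k:ℝ)+1) ≤ Real.log (3*t) :=
      Real.log_le_log (by positivity) h1
    rw [Real.log_mul (by norm_num) htpos.ne'] at h2
    have h4 : Real.log (Real.sqrt t) ≤ Real.sqrt t - 1 :=
      Real.log_le_sub_one_of_pos (Real.sqrt_pos.2 htpos)
    rw [Real.log_sqrt htpos.le] at h4
    have h5 : Real.log t ≤ 2*Real.sqrt t := by linarith [Real.sqrt_nonneg t]
    linarith
  have hsqt : 32*Real.sqrt t ≤ 17*L*t := by
    have h1 : (32/(17*L)) ^ 2 ≤ t :=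
      le_trans (le_trans (le_max_left _ _) (le_max_right 1 _)) ht_ge
    have h2 : 32/(17*L) ≤ Real.sqrt t := by
      rw [show (32/(17*L)) = Real.sqrt ((32/(17*L)) ^ 2) from
        (Real.sqrt_sq (by positivity)).symm]
      exact Real.sqrt_le_sqrt h1
    have h3 : 1 ≤ Real.sqrt t := by
      rw [show (1:ℝ) = Real.sqrt 1 from Real.sqrt_one.symm]
      exact Real.sqrt_le_sqrt ht1
    have h4 : Real.sqrt t * Real.sqrt t = t := Real.mul_self_sqrt htpos.le
    have h5 : 32 ≤ 17*L*Real.sqrt t := by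
      rw [div_le_iff₀ (by positivity : (0:ℝ) < 17*L)] at h2
      linarith
    calc 32*Real.sqrt t ≤ (17*L*Real.sqrt t)*Real.sqrt t :=
          mul_le_mul_of_nonneg_right h5 (Real.sqrt_nonneg t)
      _ = 17*L*t := by rw [mul_assoc, h4]
  have hc₂t : c₂ ≤ 17*L*t := by
    have h1 : c₂/(17*L) ≤ t :=
      le_trans (le_trans (le_max_right _ _) (le_max_right 1 _)) ht_ge
    calc c₂ = (c₂/(17*L))*(17*L) := by field_simp
      _ ≤ t*(17*L) := mul_le_mul_of_nonneg_right h1 (by positivity)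
      _ = 17*L*t := by ring
  have hlog2le1 : Real.log 2 ≤ 1 := by
    linarith [Real.log_le_sub_one_of_pos (by norm_num : (0:ℝ) < 2)]
  have hkL : 2*L*(k:ℝ)*Real.log 2 ≤ 2*L*t + 2*L := by
    have hknn : (0:ℝ) ≤ (k:ℝ) := Nat.cast_nonneg k
    have h1 : (k:ℝ)*Real.log 2 ≤ t + 1 := by
      calc (k:ℝ)*Real.log 2 ≤ (k:ℝ)*1 :=
            mul_le_mul_of_nonneg_left hlog2le1 hknn
        _ = (k:ℝ) := mul_one _
        _ ≤ t + 1 := hkt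
    have h2 := mul_le_mul_of_nonneg_left h1 hLpos.le
    linarith
  -- final assembly
  calc ∑ n ∈ Finset.range N, (y n - preds (aggPred w e) x y n) ^ 2
      ≤ ∑ n ∈ Finset.range N, (y n - e i (x n)) ^ 2
          + 8 * (Real.log W0 - Real.log (w i)) := hmain
    _ ≤ (∑ n ∈ Finset.range N, (y n - F (x n)) ^ 2) + (2*B+3)
          + 8*Real.log W0 + 8*(-Real.log (w i)) := by linarith
    _ ≤ (∑ n ∈ Finset.range N, (y n - F (x n)) ^ 2) + (2*B+3) + 8*Real.log W0
          + 16*Real.log ((k:ℝ)+1) + 16*L*(k:ℝ)*Real.log 2 := by linarith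
    _ ≤ ∑ n ∈ Finset.range N, (y n - F (x n)) ^ 2 + 50 * L * t := by
        have e1 : 16*Real.log ((k:ℝ)+1) ≤ 16*Real.log 3 + 32*Real.sqrt t := by linarith
        have e2 : 16*L*(k:ℝ)*Real.log 2 ≤ 16*L*t + 16*L := by linarith
        linarith
end

section
/- There is a universal constant C > 0 with the following property. Let X be a compact metric space and let 𝓕 be a Banach space that is a linear subspace of C(X) embedded in C(X), and suppose L := limsup_{ε→0} H_ε(U_𝓕) / log₂(1/ε) satisfies L ∈ (0, ∞), where U_𝓕 is the unit ball of 𝓕 and H_ε is metric entropy in the sup-norm metric. There exists a prediction strategy that guarantees, for every sequence of signals x₁, x₂, … ∈ X and observations y₁, y₂, … ∈ [−1, 1]: for every F ∈ 𝓕 there is N₀ such that for all N ≥ N₀, Σ_{n=1}^N (yₙ − μₙ)² ≤ Σ_{n=1}^N (yₙ − F(xₙ))² + C·L·log₂ N. -/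
open scoped BigOperators

universe u v

noncomputable def clip (t : ℝ) : ℝ := max (-1) (min 1 t)

-- key mixability / supporting line inequality
lemma key_ineq (a b : ℝ) (ha : |a| ≤ 2) (hb : |b| ≤ 2) :
    Real.exp ((a^2 - b^2)/16) ≤ 1 + a*(a-b)/8 := by
  set u : ℝ := (a^2 - b^2)/16 with hu
  have ha2 : a^2 ≤ 4 := by nlinarith [abs_nonneg a, sq_abs a, abs_le.mp ha]
  have hb2 : b^2 ≤ 4 := by nlinarith [abs_nonneg b, sq_abs b, abs_le.mp hb]
  have hu1 : u < 1 := by rw [hu]; nlinarith [sq_nonneg b]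
  have h1 : Real.exp u ≤ 1/(1-u) := by
    rw [le_div_iff₀ (by linarith)]
    have h2 := Real.add_one_le_exp (-u)
    have hmul : Real.exp u * Real.exp (-u) = 1 := by rw [← Real.exp_add]; simp
    nlinarith [Real.exp_pos u]
  refine h1.trans ?_
  rw [div_le_iff₀ (by linarith)]
  have key : (a-b)^2 * (1 - (a*(a+b))/8) ≥ 0 := by
    have : a*(a+b) ≤ 8 := by nlinarith [abs_le.mp ha, abs_le.mp hb]
    nlinarith [sq_nonneg (a-b)]
  nlinarith [sq_nonneg (a-b)]


lemma clip_mem (t : ℝ) : -1 ≤ clip t ∧ clip t ≤ 1 := by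
  constructor
  · exact le_max_left _ _
  · simp only [clip, max_le_iff]; constructor <;> [linarith; exact min_le_left _ _]

lemma clip_lip (s t : ℝ) : |clip s - clip t| ≤ |s - t| := by
  unfold clip
  calc |max (-1) (min 1 s) - max (-1) (min 1 t)|
      = |max (min 1 s) (-1) - max (min 1 t) (-1)| := by rw [max_comm (-1), max_comm (-1)]
    _ ≤ |min 1 s - min 1 t| := abs_max_sub_max_le_abs _ _ _
    _ ≤ |s - t| := by
        refine (abs_min_sub_min_le_max 1 s 1 t).trans ?_
        simp

lemma clip_le (y t : ℝ) (hy : |y| ≤ 1) : (y - clip t)^2 ≤ (y - t)^2 := by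
  have hy' := abs_le.mp hy
  unfold clip
  rcases le_total t (-1) with h | h
  · rw [min_eq_right (by linarith), max_eq_left (by linarith)]
    nlinarith
  · rcases le_total 1 t with h2 | h2
    · rw [min_eq_left h2, max_eq_right (by linarith)]
      nlinarith
    · rw [min_eq_right h2, max_eq_right h]

lemma clip_loss (y g f : ℝ) (ε : ℝ) (hy : |y| ≤ 1) (hgf : |g - f| ≤ ε) :
    (y - clip g)^2 ≤ (y - f)^2 + 4*ε := by
  have h1 : (y - clip f)^2 ≤ (y - f)^2 := clip_le y f hy
  have h2 : |clip g - clip f| ≤ ε := (clip_lip g f).trans hgf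
  have h2' := abs_le.mp h2
  have hy' := abs_le.mp hy
  have hcg := clip_mem g
  have hcf := clip_mem f
  nlinarith

noncomputable def eloss {X I : Type*} (E : I → X → ℝ) (i : I) (h : List (X × ℝ)) : ℝ :=
  (h.map (fun q => (q.2 - E i q.1)^2)).sum

noncomputable def ewt {X I : Type*} (p : I → ℝ) (E : I → X → ℝ) (h : List (X × ℝ)) (i : I) : ℝ :=
  p i * Real.exp (-(eloss E i h)/16)

noncomputable def ewa {X I : Type*} (p : I → ℝ) (E : I → X → ℝ) (h : List (X × ℝ)) (x : X) : ℝ :=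
  (∑' i, ewt p E h i * E i x) / (∑' i, ewt p E h i)

section EWA
variable {X I : Type*} {p : I → ℝ} {E : I → X → ℝ}

lemma eloss_nonneg (i : I) (h : List (X × ℝ)) : 0 ≤ eloss E i h := by
  refine List.sum_nonneg ?_
  intro a ha
  simp only [List.mem_map] at ha
  obtain ⟨q, _, rfl⟩ := ha
  positivity

lemma ewt_pos (hp : ∀ i, 0 < p i) (h : List (X × ℝ)) (i : I) : 0 < ewt p E h i :=
  mul_pos (hp i) (Real.exp_pos _)

lemma ewt_le (hp : ∀ i, 0 < p i) (h : List (X × ℝ)) (i : I) : ewt p E h i ≤ p i := by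
  have h1 : Real.exp (-(eloss E i h)/16) ≤ 1 := by
    rw [Real.exp_le_one_iff]
    have := eloss_nonneg (E := E) i h
    linarith
  calc ewt p E h i ≤ p i * 1 := mul_le_mul_of_nonneg_left h1 (hp i).le
    _ = p i := mul_one _

lemma ewt_summable (hp : ∀ i, 0 < p i) (hps : Summable p) (h : List (X × ℝ)) :
    Summable (ewt p E h) :=
  Summable.of_nonneg_of_le (fun i => (ewt_pos hp h i).le) (ewt_le hp h) hps

lemma ewt_tsum_pos [Nonempty I] (hp : ∀ i, 0 < p i) (hps : Summable p) (h : List (X × ℝ)) :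
    0 < ∑' i, ewt p E h i := by
  obtain ⟨i₀⟩ := ‹Nonempty I›
  exact Summable.tsum_pos (ewt_summable hp hps h) (fun i => (ewt_pos hp h i).le) i₀ (ewt_pos hp h i₀)

lemma ewtE_abs_le (hp : ∀ i, 0 < p i) (hE : ∀ i x, |E i x| ≤ 1) (h : List (X × ℝ)) (x : X)
    (i : I) : |ewt p E h i * E i x| ≤ ewt p E h i := by
  rw [abs_mul, abs_of_pos (ewt_pos hp h i)]
  calc ewt p E h i * |E i x| ≤ ewt p E h i * 1 :=
        mul_le_mul_of_nonneg_left (hE i x) (ewt_pos hp h i).le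
    _ = ewt p E h i := mul_one _

lemma ewtE_summable (hp : ∀ i, 0 < p i) (hps : Summable p) (hE : ∀ i x, |E i x| ≤ 1)
    (h : List (X × ℝ)) (x : X) : Summable (fun i => ewt p E h i * E i x) :=
  Summable.of_abs (Summable.of_nonneg_of_le (fun i => abs_nonneg _)
    (ewtE_abs_le hp hE h x) (ewt_summable hp hps h))

lemma ewa_abs_le [Nonempty I] (hp : ∀ i, 0 < p i) (hps : Summable p)
    (hE : ∀ i x, |E i x| ≤ 1) (h : List (X × ℝ)) (x : X) : |ewa p E h x| ≤ 1 := by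
  have hW := ewt_tsum_pos (E := E) hp hps h
  rw [ewa, abs_div, abs_of_pos hW, div_le_one hW]
  calc |∑' i, ewt p E h i * E i x| ≤ ∑' i, |ewt p E h i * E i x| := by
        have hs : Summable fun i => ‖ewt p E h i * E i x‖ := by
          simpa only [Real.norm_eq_abs] using (ewtE_summable hp hps hE h x).abs
        simpa only [Real.norm_eq_abs] using
          norm_tsum_le_tsum_norm (f := fun i => ewt p E h i * E i x) hs
    _ ≤ ∑' i, ewt p E h i :=
        Summable.tsum_le_tsum (ewtE_abs_le hp hE h x) ((ewtE_summable hp hps hE h x).abs)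
          (ewt_summable hp hps h)
lemma ewa_step [Nonempty I] (hp : ∀ i, 0 < p i) (hps : Summable p) (hE : ∀ i x, |E i x| ≤ 1)
    (h : List (X × ℝ)) (x : X) (y : ℝ) (hy : |y| ≤ 1) :
    ∑' i, ewt p E h i * Real.exp (-(y - E i x)^2/16) ≤
      (∑' i, ewt p E h i) * Real.exp (-(y - ewa p E h x)^2/16) := by
  set W := ∑' i, ewt p E h i with hWdef
  set T := ∑' i, ewt p E h i * E i x with hTdef
  set μ := ewa p E h x with hμdef
  have hW : 0 < W := ewt_tsum_pos hp hps h
  have hμT : T = μ * W := by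
    rw [hμdef, ewa, ← hWdef, ← hTdef]; field_simp
  have hμ1 : |μ| ≤ 1 := ewa_abs_le hp hps hE h x
  set a := y - μ with ha
  have haa : |a| ≤ 2 := by
    have h1 := abs_le.mp hy; have h2 := abs_le.mp hμ1
    rw [ha, abs_le]; constructor <;> [linarith; linarith]
  set c1 := Real.exp (-a^2/16) * (1 - a*μ/8) with hc1
  set c2 := Real.exp (-a^2/16) * a/8 with hc2
  have hpt : ∀ i, ewt p E h i * Real.exp (-(y - E i x)^2/16) ≤
      c1 * ewt p E h i + c2 * (ewt p E h i * E i x) := by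
    intro i
    have hb : |y - E i x| ≤ 2 := by
      have h1 := abs_le.mp hy; have h2 := abs_le.mp (hE i x)
      rw [abs_le]; constructor <;> [linarith; linarith]
    have hk := key_ineq a (y - E i x) haa hb
    have hsplit : Real.exp (-(y - E i x)^2/16)
        = Real.exp ((a^2 - (y - E i x)^2)/16) * Real.exp (-a^2/16) := by
      rw [← Real.exp_add]; ring_nf
    rw [hsplit]
    have hkm : ewt p E h i * (Real.exp ((a^2 - (y - E i x)^2)/16) * Real.exp (-a^2/16))
        ≤ ewt p E h i * ((1 + a*(a - (y - E i x))/8) * Real.exp (-a^2/16)) := by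
      refine mul_le_mul_of_nonneg_left ?_ (ewt_pos hp h i).le
      exact mul_le_mul_of_nonneg_right hk (Real.exp_pos _).le
    refine hkm.trans_eq ?_
    rw [hc1, hc2]
    have : a - (y - E i x) = E i x - μ := by rw [ha]; ring
    rw [this]; ring
  have hLs : Summable (fun i => ewt p E h i * Real.exp (-(y - E i x)^2/16)) := by
    have hnn : ∀ i, 0 ≤ ewt p E h i * Real.exp (-(y - E i x)^2/16) :=
      fun i => mul_nonneg (ewt_pos hp h i).le (Real.exp_pos _).le
    refine Summable.of_nonneg_of_le hnn (fun i => ?_) (ewt_summable (E:=E) hp hps h)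
    have : Real.exp (-(y - E i x)^2/16) ≤ 1 := by
      rw [Real.exp_le_one_iff]
      nlinarith [sq_nonneg (y - E i x)]
    calc ewt p E h i * Real.exp (-(y - E i x)^2/16) ≤ ewt p E h i * 1 :=
          mul_le_mul_of_nonneg_left this (ewt_pos hp h i).le
      _ = ewt p E h i := mul_one _
  have hRs1 : Summable (fun i => c1 * ewt p E h i) := (ewt_summable hp hps h).mul_left c1
  have hRs2 : Summable (fun i => c2 * (ewt p E h i * E i x)) := (ewtE_summable hp hps hE h x).mul_left c2
  have hmain := Summable.tsum_le_tsum hpt hLs (hRs1.add hRs2)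
  refine hmain.trans_eq ?_
  rw [Summable.tsum_add hRs1 hRs2, tsum_mul_left, tsum_mul_left, ← hWdef, ← hTdef, hμT, hc1, hc2]
  ring
lemma eloss_hist {x : ℕ → X} {y : ℕ → ℝ} (i : I) (n : ℕ) :
    eloss E i ((List.range n).map fun k => (x k, y k)) =
      ∑ k ∈ Finset.range n, (y k - E i (x k))^2 := by
  induction n with
  | zero => simp [eloss]
  | succ n ih => rw [Finset.sum_range_succ, ← ih]; simp [eloss, List.range_succ]

lemma ewa_invariant [Nonempty I] (hp : ∀ i, 0 < p i) (hps : Summable p)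
    (hp1 : ∑' i, p i ≤ 1) (hE : ∀ i x, |E i x| ≤ 1)
    (x : ℕ → X) (y : ℕ → ℝ) (hy : ∀ n, |y n| ≤ 1) (n : ℕ) :
    ∑' i, ewt p E ((List.range n).map fun k => (x k, y k)) i ≤
      Real.exp (-(∑ k ∈ Finset.range n, (y k - preds (ewa p E) x y k)^2)/16) := by
  induction n with
  | zero => simpa [ewt, eloss] using hp1
  | succ n ih =>
    set h := (List.range n).map fun k => (x k, y k) with hh
    have hnext : ∀ i, ewt p E ((List.range (n+1)).map fun k => (x k, y k)) i
        = ewt p E h i * Real.exp (-(y n - E i (x n))^2/16) := by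
      intro i
      have he : eloss E i ((List.range (n+1)).map fun k => (x k, y k))
          = eloss E i h + (y n - E i (x n))^2 := by
        rw [eloss_hist, eloss_hist (x := x) (y := y), Finset.sum_range_succ]
      rw [ewt, ewt, he, neg_add, add_div, Real.exp_add, mul_assoc]
    rw [tsum_congr hnext]
    have hstep := ewa_step hp hps hE h (x n) (y n) (hy n)
    refine hstep.trans ?_
    have hmul := mul_le_mul_of_nonneg_right ih
      (Real.exp_pos (-(y n - ewa p E h (x n))^2/16)).le
    refine hmul.trans_eq ?_
    have hpred : preds (ewa p E) x y n = ewa p E h (x n) := rfl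
    rw [← Real.exp_add, Finset.sum_range_succ, hpred]
    congr 1
    ring

lemma ewa_regret [Nonempty I] (hp : ∀ i, 0 < p i) (hps : Summable p)
    (hp1 : ∑' i, p i ≤ 1) (hE : ∀ i x, |E i x| ≤ 1)
    (x : ℕ → X) (y : ℕ → ℝ) (hy : ∀ n, |y n| ≤ 1) (i : I) (N : ℕ) :
    ∑ n ∈ Finset.range N, (y n - preds (ewa p E) x y n)^2 ≤
      ∑ n ∈ Finset.range N, (y n - E i (x n))^2 + 16 * Real.log (1 / p i) := by
  have hinv := ewa_invariant hp hps hp1 hE x y hy N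
  set hN := (List.range N).map fun k => (x k, y k) with hh
  have hone : ewt p E hN i ≤ ∑' j, ewt p E hN j :=
    Summable.le_tsum (ewt_summable (E := E) hp hps hN) i (fun j _ => (ewt_pos hp hN j).le)
  have hkey : p i * Real.exp (-(∑ n ∈ Finset.range N, (y n - E i (x n))^2)/16) ≤
      Real.exp (-(∑ n ∈ Finset.range N, (y n - preds (ewa p E) x y n)^2)/16) := by
    have : ewt p E hN i = p i * Real.exp (-(∑ n ∈ Finset.range N, (y n - E i (x n))^2)/16) := by
      rw [ewt, eloss_hist]
    rw [← this]
    exact hone.trans hinv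
  have hlog := Real.log_le_log (mul_pos (hp i) (Real.exp_pos _)) hkey
  rw [Real.log_mul (hp i).ne' (Real.exp_pos _).ne', Real.log_exp, Real.log_exp] at hlog
  rw [one_div, Real.log_inv]
  linarith

end EWA

lemma telescope_sum (M : ℕ) :
    ∑ m ∈ Finset.range M, (1:ℝ)/((m+1)*(m+2)) = 1 - 1/(M+1) := by
  induction M with
  | zero => simp
  | succ M ih =>
    rw [Finset.sum_range_succ, ih]
    have h1 : (M:ℝ)+1 ≠ 0 := by positivity
    have h2 : (M:ℝ)+2 ≠ 0 := by positivity
    push_cast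
    field_simp
    ring

lemma qsum_summable : Summable (fun m : ℕ => (1:ℝ)/((m+1)*(m+2))) := by
  refine summable_of_sum_range_le (fun n => by positivity) (fun n => ?_) (c := 1)
  rw [telescope_sum]
  have : (0:ℝ) < 1/(n+1) := by positivity
  linarith

lemma qsum_le_one : ∑' m : ℕ, (1:ℝ)/((m+1)*(m+2)) ≤ 1 := by
  refine Summable.tsum_le_of_sum_range_le qsum_summable (fun n => ?_)
  rw [telescope_sum]
  have : (0:ℝ) < 1/(n+1) := by positivity
  linarith

section Prior
variable {E' : Type*} (S : ℕ → Finset E')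

noncomputable def netPrior (i : Σ m : ℕ, {b : E' // b ∈ S m}) : ℝ :=
  ((1:ℝ)/((i.1+1)*(i.1+2))) / (S i.1).card

lemma netPrior_pos (hS : ∀ m, 0 < (S m).card) (i : Σ m : ℕ, {b : E' // b ∈ S m}) :
    0 < netPrior S i := by
  have := hS i.1
  have h : (0:ℝ) < (S i.1).card := by exact_mod_cast this
  have h1 : (0:ℝ) < (i.1:ℝ)+1 := by positivity
  unfold netPrior
  positivity

lemma netPrior_fiber (hS : ∀ m, 0 < (S m).card) (m : ℕ) :
    ∑' b : {b : E' // b ∈ S m}, netPrior S ⟨m, b⟩ = (1:ℝ)/((m+1)*(m+2)) := by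
  rw [tsum_fintype]
  simp only [netPrior]
  rw [Finset.sum_const, Finset.card_univ, Fintype.card_coe, nsmul_eq_mul]
  have h : ((S m).card : ℝ) ≠ 0 := by
    have := hS m; positivity
  field_simp

lemma netPrior_summable (hS : ∀ m, 0 < (S m).card) : Summable (netPrior S) := by
  rw [summable_sigma_of_nonneg (fun i => (netPrior_pos S hS i).le)]
  constructor
  · intro m; exact Summable.of_finite
  · refine Summable.congr qsum_summable (fun m => ?_)
    rw [netPrior_fiber S hS m]

lemma netPrior_tsum_le_one (hS : ∀ m, 0 < (S m).card) : ∑' i, netPrior S i ≤ 1 := by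
  rw [Summable.tsum_sigma (netPrior_summable S hS)]
  refine le_trans (le_of_eq (tsum_congr (fun m => netPrior_fiber S hS m))) qsum_le_one
end Prior

lemma log_lin (L T : ℝ) (hL : 0 < L) (hT1 : 1 ≤ T) (hT2 : 16384/L^2 ≤ T) :
    32 * Real.log (T+3) ≤ L * T := by
  have h3 : (0:ℝ) < T + 3 := by linarith
  have hs : Real.log (T+3) ≤ 2 * Real.sqrt (T+3) := by
    have h := Real.log_sqrt h3.le
    have h2 : Real.log (Real.sqrt (T+3)) ≤ Real.sqrt (T+3) - 1 :=
      Real.log_le_sub_one_of_pos (Real.sqrt_pos.mpr h3)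
    nlinarith [Real.sqrt_nonneg (T+3)]
  have hsq : Real.sqrt (T+3) ≤ L*T/64 := by
    rw [show L*T/64 = Real.sqrt ((L*T/64)^2) from (Real.sqrt_sq (by positivity)).symm]
    apply Real.sqrt_le_sqrt
    have hid : 16384/L^2 * L^2 = 16384 := div_mul_cancel₀ _ (by positivity)
    have hTpos : (0:ℝ) < T := by linarith
    have hq : 16384/L^2 * T ≤ T * T := mul_le_mul_of_nonneg_right hT2 hTpos.le
    have hL2 : (0:ℝ) < L^2 := by positivity
    have h16 : 16384 * T ≤ L^2 * (T*T) := by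
      have := mul_le_mul_of_nonneg_left hq hL2.le
      calc 16384 * T = L^2 * (16384/L^2 * T) := by field_simp
        _ ≤ L^2 * (T*T) := this
    nlinarith
  linarith

lemma clog_le_logb (N : ℕ) (hN : 2 ≤ N) :
    (Nat.clog 2 N : ℝ) ≤ Real.logb 2 N + 1 := by
  have hc : 0 < Nat.clog 2 N := Nat.clog_pos one_lt_two hN
  have h := Nat.pow_pred_clog_lt_self one_lt_two (show 1 < N by omega)
  have hcast : ((2:ℝ) ^ (Nat.clog 2 N).pred) < (N:ℝ) := by exact_mod_cast h
  have hNpos : (0:ℝ) < N := by positivity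
  have hlog := Real.logb_lt_logb (by norm_num : (1:ℝ) < 2) (by positivity) hcast
  rw [Real.logb_pow, Real.logb_self_eq_one (by norm_num)] at hlog
  have hpred : ((Nat.clog 2 N).pred : ℝ) = (Nat.clog 2 N : ℝ) - 1 := by
    rw [Nat.pred_eq_sub_one, Nat.cast_sub hc]
    norm_num
  rw [hpred] at hlog
  linarith [hlog]

lemma sixtyfour_log_two : 64 * Real.log 2 ≤ 45 := by
  nlinarith [Real.log_two_lt_d9]

set_option maxHeartbeats 1000000 in
/-- Corollary 2: for a Banach space `𝓕` embedded in `C(X)` whose unit ball has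
"metric dimension" `L ∈ (0,∞)`, the regret is `O(L log N)` for each `F ∈ 𝓕`. -/
theorem stmt6 : ∃ C : ℝ, 0 < C ∧
    ∀ (X : Type u) [MetricSpace X] [CompactSpace X]
      (𝓕 : Type v) [NormedAddCommGroup 𝓕] [NormedSpace ℝ 𝓕] [CompleteSpace 𝓕]
      (ι : 𝓕 →ₗ[ℝ] C(X, ℝ)) (L : ℝ),
      Function.Injective ι →
      Continuous ι →
      Filter.IsBoundedUnder (· ≤ ·) (nhdsWithin 0 (Set.Ioi 0))
        (fun ε : ℝ =>
          metricEntropy (⇑ι '' Metric.closedBall (0 : 𝓕) 1) ε / Real.logb 2 (1 / ε)) →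
      L = Filter.limsup (fun ε : ℝ =>
            metricEntropy (⇑ι '' Metric.closedBall (0 : 𝓕) 1) ε / Real.logb 2 (1 / ε))
            (nhdsWithin 0 (Set.Ioi 0)) →
      0 < L →
      ∃ σ : List (X × ℝ) → X → ℝ,
        ∀ x : ℕ → X, ∀ y : ℕ → ℝ, (∀ n, y n ∈ Set.Icc (-1 : ℝ) 1) →
          ∀ f : 𝓕, ∃ N₀ : ℕ, ∀ N ≥ N₀,
            ∑ n ∈ Finset.range N, (y n - preds σ x y n) ^ 2 ≤
              ∑ n ∈ Finset.range N, (y n - ι f (x n)) ^ 2 +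
                C * L * Real.logb 2 N := by
  classical
  refine ⟨1000, by norm_num, ?_⟩
  intro X _ _ 𝓕 _ _ _ ι L hinj hcont hbdd hLdef hLpos
  set A : Set C(X,ℝ) := ⇑ι '' Metric.closedBall (0:𝓕) 1 with hA
  by_cases hnets : ∀ ε : ℝ, 0 < ε →
      ∃ S : Finset C(X,ℝ), ↑S ⊆ A ∧ ∀ a ∈ A, ∃ b ∈ S, dist a b ≤ ε
  swap
  · -- if no finite nets exist at some scale, the limsup is 0, contradicting 0 < L
    exfalso
    push_neg at hnets
    obtain ⟨ε₀, hε₀, hno⟩ := hnets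
    have hzero : ∀ ε ∈ Set.Ioo (0:ℝ) ε₀,
        metricEntropy A ε / Real.logb 2 (1/ε) = 0 := by
      intro ε hε
      have hempty : {n : ℕ | ∃ S : Finset C(X,ℝ), ↑S ⊆ A ∧ S.card = n ∧
          ∀ a ∈ A, ∃ b ∈ S, dist a b ≤ ε} = ∅ := by
        ext n
        simp only [Set.mem_setOf_eq, Set.mem_empty_iff_false, iff_false, not_exists]
        rintro S ⟨hsub, -, hnet⟩
        obtain ⟨a, ha, hfar⟩ := hno S hsub
        obtain ⟨b, hb, hd⟩ := hnet a ha
        exact absurd (hd.trans hε.2.le) (not_le.mpr (hfar b hb))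
      have hc0 : coveringNumber A ε = 0 := by
        unfold coveringNumber
        rw [hempty, Nat.sInf_empty]
      unfold metricEntropy
      rw [hc0]
      simp
    have hevent : (fun ε : ℝ => metricEntropy A ε / Real.logb 2 (1/ε))
        =ᶠ[nhdsWithin 0 (Set.Ioi 0)] fun _ => (0:ℝ) := by
      filter_upwards [Ioo_mem_nhdsGT_of_mem (Set.mem_Ico.mpr ⟨le_refl (0:ℝ), hε₀⟩)] with ε hε
      exact hzero ε hε
    rw [Filter.limsup_congr hevent, Filter.limsup_const] at hLdef
    rw [hLdef] at hLpos
    exact lt_irrefl 0 hLpos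
  · -- main case: nets exist at every scale
    have hA0 : (ι (0:𝓕) : C(X,ℝ)) ∈ A :=
      ⟨0, Metric.mem_closedBall_self zero_le_one, rfl⟩
    have hmin : ∀ m : ℕ, ∃ S : Finset C(X,ℝ), ↑S ⊆ A ∧
        S.card = coveringNumber A ((1/2:ℝ)^(2*m)) ∧
        ∀ a ∈ A, ∃ b ∈ S, dist a b ≤ (1/2:ℝ)^(2*m) := by
      intro m
      have hεpos : (0:ℝ) < (1/2)^(2*m) := by positivity
      obtain ⟨S₀, h1, h2⟩ := hnets _ hεpos
      have hne : {n : ℕ | ∃ S : Finset C(X,ℝ), ↑S ⊆ A ∧ S.card = n ∧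
          ∀ a ∈ A, ∃ b ∈ S, dist a b ≤ (1/2:ℝ)^(2*m)}.Nonempty := ⟨S₀.card, S₀, h1, rfl, h2⟩
      exact Nat.sInf_mem hne
    choose S hSsub hScard hSnet using hmin
    have hSne : ∀ m, (S m).Nonempty := by
      intro m
      obtain ⟨b, hb, -⟩ := hSnet m _ hA0
      exact ⟨b, hb⟩
    have hcardpos : ∀ m, 0 < (S m).card := fun m => Finset.card_pos.mpr (hSne m)
    haveI hIne : Nonempty (Σ m : ℕ, {b : C(X,ℝ) // b ∈ S m}) :=
      ⟨⟨0, ⟨(hSne 0).choose, (hSne 0).choose_spec⟩⟩⟩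
    set Ex : (Σ m : ℕ, {b : C(X,ℝ) // b ∈ S m}) → X → ℝ :=
      fun i x => clip ((2:ℝ)^(i.1) * (i.2 : C(X,ℝ)) x) with hEx
    have hp := netPrior_pos S hcardpos
    have hps := netPrior_summable S hcardpos
    have hp1 := netPrior_tsum_le_one S hcardpos
    have hE : ∀ i x', |Ex i x'| ≤ 1 := fun i x' =>
      abs_le.mpr ⟨(clip_mem _).1, (clip_mem _).2⟩
    refine ⟨ewa (netPrior S) Ex, ?_⟩
    intro x y hy f
    -- quantitative entropy bound, eventually in the scale
    have hev : ∀ᶠ ε in nhdsWithin (0:ℝ) (Set.Ioi 0),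
        metricEntropy A ε / Real.logb 2 (1/ε) < 2*L := by
      refine Filter.eventually_lt_of_limsup_lt ?_ hbdd
      rw [← hLdef]; linarith
    obtain ⟨ε₁, hε₁, hsub₁⟩ := mem_nhdsGT_iff_exists_Ioo_subset.mp hev
    obtain ⟨m₀', hm₀'⟩ := exists_pow_lt_of_lt_one
      (show (0:ℝ) < min ε₁ 1 from lt_min hε₁ one_pos) (show (1/2:ℝ) < 1 by norm_num)
    set m₀ := m₀' + 1 with hm₀def
    have hKb : ∀ m, m₀ ≤ m → ((S m).card : ℝ) ≤ (2:ℝ) ^ (4*L*m) := by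
      intro m hm
      have hεpos : (0:ℝ) < (1/2)^(2*m) := by positivity
      have hεle : ((1/2:ℝ))^(2*m) < min ε₁ 1 := by
        refine lt_of_le_of_lt ?_ hm₀'
        exact pow_le_pow_of_le_one (by norm_num) (by norm_num) (by omega)
      have hg : metricEntropy A ((1/2:ℝ)^(2*m)) / Real.logb 2 (1/((1/2:ℝ))^(2*m)) < 2*L :=
        hsub₁ ⟨hεpos, lt_of_lt_of_le hεle (min_le_left _ _)⟩
      have hinv : 1/((1/2:ℝ))^(2*m) = (2:ℝ)^(2*m) := by
        rw [one_div, ← inv_pow]; norm_num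
      have hlogb : Real.logb 2 ((2:ℝ)^(2*m)) = ((2*m : ℕ) : ℝ) := by
        rw [Real.logb_pow, Real.logb_self_eq_one (by norm_num), mul_one]
      have hmpos : 0 < m := by omega
      have hlpos : (0:ℝ) < Real.logb 2 (1/((1/2:ℝ))^(2*m)) := by
        rw [hinv, hlogb]
        have : 0 < 2*m := by omega
        exact_mod_cast this
      have hent : Real.logb 2 ((coveringNumber A ((1/2:ℝ)^(2*m)) : ℕ) : ℝ) <
          2*L * Real.logb 2 (1/((1/2:ℝ))^(2*m)) := by
        have h' := (div_lt_iff₀ hlpos).mp hg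
        unfold metricEntropy at h'
        exact h'
      have hKpos : (0:ℝ) < ((coveringNumber A ((1/2:ℝ)^(2*m)) : ℕ) : ℝ) := by
        rw [← hScard m]
        exact_mod_cast hcardpos m
      have hKlt := (Real.logb_lt_iff_lt_rpow (by norm_num) hKpos).mp hent
      rw [hinv, hlogb] at hKlt
      rw [hScard m]
      refine hKlt.le.trans (le_of_eq ?_)
      congr 1
      push_cast
      ring
    obtain ⟨Mf, hMf⟩ : ∃ M : ℕ, ‖f‖ ≤ (2:ℝ)^M := by
      obtain ⟨n, hn⟩ := pow_unbounded_of_one_lt ‖f‖ (by norm_num : (1:ℝ) < 2)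
      exact ⟨n, hn.le⟩
    have happrox : ∀ m : ℕ, Mf ≤ m → ∃ b ∈ S m, ∀ x' : X,
        |(2:ℝ)^m * b x' - ι f x'| ≤ (1/2:ℝ)^m := by
      intro m hm
      have h2m : (0:ℝ) < (2:ℝ)^m := by positivity
      set c : ℝ := ((2:ℝ)^m)⁻¹ with hc
      have hcpos : 0 < c := by positivity
      have hf' : (ι (c • f) : C(X,ℝ)) ∈ A := by
        refine ⟨c • f, ?_, rfl⟩
        rw [Metric.mem_closedBall, dist_zero_right, norm_smul]
        have hfle : ‖f‖ ≤ (2:ℝ)^m :=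
          hMf.trans (pow_le_pow_right₀ (by norm_num) hm)
        have hcn : ‖c‖ = c := by rw [Real.norm_eq_abs, abs_of_pos hcpos]
        rw [hcn]
        calc c * ‖f‖ ≤ c * (2:ℝ)^m := mul_le_mul_of_nonneg_left hfle hcpos.le
          _ = 1 := by rw [hc]; field_simp
      obtain ⟨b, hb, hdist⟩ := hSnet m _ hf'
      refine ⟨b, hb, fun x' => ?_⟩
      have h1 : |(ι (c • f) : C(X,ℝ)) x' - b x'| ≤ (1/2:ℝ)^(2*m) := by
        have hd := ContinuousMap.dist_apply_le_dist (f := (ι (c • f) : C(X,ℝ))) (g := b) x'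
        rw [Real.dist_eq] at hd
        exact hd.trans hdist
      have h2 : (ι (c • f) : C(X,ℝ)) x' = c * ((ι f : C(X,ℝ)) x') := by
        rw [map_smul]
        rfl
      have h3 : (2:ℝ)^m * c = 1 := by rw [hc]; field_simp
      have h4 : (2:ℝ)^m * b x' - (ι f : C(X,ℝ)) x'
          = (2:ℝ)^m * (b x' - c * (ι f : C(X,ℝ)) x') := by
        rw [mul_sub, ← mul_assoc, h3, one_mul]
      have hpow : (2:ℝ)^m * (1/2:ℝ)^(2*m) = (1/2:ℝ)^m := by
        rw [one_div, inv_pow, inv_pow, two_mul, pow_add]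
        field_simp
      rw [h4, abs_mul, abs_of_pos h2m]
      calc (2:ℝ)^m * |b x' - c * (ι f : C(X,ℝ)) x'|
          = (2:ℝ)^m * |(ι (c • f) : C(X,ℝ)) x' - b x'| := by rw [← h2, abs_sub_comm]
        _ ≤ (2:ℝ)^m * (1/2:ℝ)^(2*m) := mul_le_mul_of_nonneg_left h1 h2m.le
        _ = (1/2:ℝ)^m := hpow
    set M₁ : ℕ := max m₀ Mf with hM₁
    set B : ℝ := max (max ((M₁:ℝ)+1) 1) (max (16384/L^2) (4/L)) with hB
    refine ⟨⌈(2:ℝ)^B⌉₊ + 2, ?_⟩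
    intro N hN
    have hN2 : 2 ≤ N := le_trans (by omega) hN
    have hNpos : (0:ℝ) < N := Nat.cast_pos.mpr (by omega)
    have hNR : (2:ℝ)^B ≤ N := by
      have h1 : (⌈(2:ℝ)^B⌉₊ : ℝ) ≤ (N:ℝ) := by
        have : ⌈(2:ℝ)^B⌉₊ ≤ N := by omega
        exact_mod_cast this
      exact (Nat.le_ceil _).trans h1
    set T := Real.logb 2 (N:ℝ) with hT
    have hBT : B ≤ T := (Real.le_logb_iff_rpow_le (by norm_num) hNpos).mpr hNR
    have hT1 : 1 ≤ T := le_trans (le_trans (le_max_right _ _) (le_max_left _ _)) hBT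
    have hTM₁ : (M₁:ℝ) + 1 ≤ T :=
      le_trans (le_trans (le_max_left _ _) (le_max_left _ _)) hBT
    have hT163 : 16384/L^2 ≤ T :=
      le_trans (le_trans (le_max_left _ _) (le_max_right _ _)) hBT
    have hT4 : 4 ≤ L*T := by
      have h4L : 4/L ≤ T := le_trans (le_trans (le_max_right _ _) (le_max_right _ _)) hBT
      have := (div_le_iff₀ hLpos).mp h4L
      linarith
    set m : ℕ := max M₁ (Nat.clog 2 N) with hm
    have hmM₁ : M₁ ≤ m := le_max_left _ _
    have hmm₀ : m₀ ≤ m := le_trans (le_max_left _ _) hmM₁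
    have hmMf : Mf ≤ m := le_trans (le_max_right _ _) hmM₁
    have hmT : (m:ℝ) ≤ T + 1 := by
      rw [hm]
      push_cast [Nat.cast_max]
      refine max_le ?_ ?_
      · linarith
      · exact clog_le_logb N hN2
    have hNle2m : (N:ℝ) ≤ (2:ℝ)^m := by
      have h1 : N ≤ 2^(Nat.clog 2 N) := Nat.le_pow_clog one_lt_two N
      have h2 : (2:ℕ)^(Nat.clog 2 N) ≤ 2^m := Nat.pow_le_pow_right (by norm_num) (le_max_right _ _)
      exact_mod_cast h1.trans h2
    obtain ⟨b, hb, hbx⟩ := happrox m hmMf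
    set i : (Σ m : ℕ, {b : C(X,ℝ) // b ∈ S m}) := ⟨m, ⟨b, hb⟩⟩ with hi
    have hreg := ewa_regret hp hps hp1 hE x y
      (fun n => abs_le.mpr ⟨(hy n).1, (hy n).2⟩) i N
    have hel : ∑ n ∈ Finset.range N, (y n - Ex i (x n))^2 ≤
        ∑ n ∈ Finset.range N, (y n - (ι f : C(X,ℝ)) (x n))^2 + (N:ℝ) * (4 * (1/2:ℝ)^m) := by
      have hterm : ∀ n ∈ Finset.range N, (y n - Ex i (x n))^2 ≤
          (y n - (ι f : C(X,ℝ)) (x n))^2 + 4 * (1/2:ℝ)^m := by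
        intro n _
        have hc := clip_loss (y n) ((2:ℝ)^m * b (x n)) ((ι f : C(X,ℝ)) (x n)) ((1/2:ℝ)^m)
          (abs_le.mpr ⟨(hy n).1, (hy n).2⟩) (hbx (x n))
        exact hc
      calc ∑ n ∈ Finset.range N, (y n - Ex i (x n))^2
          ≤ ∑ n ∈ Finset.range N, ((y n - (ι f : C(X,ℝ)) (x n))^2 + 4 * (1/2:ℝ)^m) :=
            Finset.sum_le_sum hterm
        _ = ∑ n ∈ Finset.range N, (y n - (ι f : C(X,ℝ)) (x n))^2 + (N:ℝ) * (4 * (1/2:ℝ)^m) := by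
            rw [Finset.sum_add_distrib, Finset.sum_const, Finset.card_range, nsmul_eq_mul]
    have hKm := hKb m hmm₀
    have hKpos' : (0:ℝ) < ((S m).card : ℝ) := by exact_mod_cast hcardpos m
    have hplog : Real.log (1 / netPrior S i) ≤
        2*Real.log ((m:ℝ)+2) + 4*L*m*Real.log 2 := by
      have h1p : 1 / netPrior S i = ((m:ℝ)+1)*(((m:ℝ)+2)*((S m).card : ℝ)) := by
        simp only [netPrior, hi]
        have hm1 : ((m:ℝ)+1) ≠ 0 := by positivity
        have hm2 : ((m:ℝ)+2) ≠ 0 := by positivity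
        field_simp
      have hne2 : ((m:ℝ)+2)*((S m).card : ℝ) ≠ 0 := (mul_pos (by positivity) hKpos').ne'
      rw [h1p, Real.log_mul (by positivity) hne2,
        Real.log_mul (by positivity) hKpos'.ne']
      have hlogK : Real.log ((S m).card : ℝ) ≤ 4*L*m*Real.log 2 := by
        refine le_trans (Real.log_le_log hKpos' hKm) ?_
        rw [Real.log_rpow (by norm_num)]
      have hm1 : Real.log ((m:ℝ)+1) ≤ Real.log ((m:ℝ)+2) :=
        Real.log_le_log (by positivity) (by linarith)
      linarith
    -- numeric assembly
    have hN4 : (N:ℝ) * (4 * (1/2:ℝ)^m) ≤ 4 := by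
      have hhalf : (1/2:ℝ)^m = ((2:ℝ)^m)⁻¹ := by rw [one_div, inv_pow]
      have h2mpos : (0:ℝ) < (2:ℝ)^m := by positivity
      have : (N:ℝ) * ((2:ℝ)^m)⁻¹ ≤ 1 := by
        rw [← div_eq_mul_inv, div_le_one h2mpos]
        exact hNle2m
      calc (N:ℝ) * (4 * (1/2:ℝ)^m) = 4 * ((N:ℝ) * ((2:ℝ)^m)⁻¹) := by rw [hhalf]; ring
        _ ≤ 4 * 1 := by linarith
        _ = 4 := by norm_num
    have hlogm : Real.log ((m:ℝ)+2) ≤ Real.log (T+3) :=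
      Real.log_le_log (by positivity) (by linarith)
    have hloglin := log_lin L T hLpos hT1 hT163
    have hm2T : (m:ℝ) ≤ 2*T := by linarith
    have hlog2m : 64 * Real.log 2 * (L * (m:ℝ)) ≤ 45 * (L * (2*T)) := by
      have hLm : 0 ≤ L * (m:ℝ) := mul_nonneg hLpos.le (Nat.cast_nonneg m)
      have h1 : 64 * Real.log 2 * (L * (m:ℝ)) ≤ 45 * (L * (m:ℝ)) :=
        mul_le_mul_of_nonneg_right sixtyfour_log_two hLm
      have h2 : L * (m:ℝ) ≤ L * (2*T) := mul_le_mul_of_nonneg_left hm2T hLpos.le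
      linarith
    have hlog_nonneg : 0 ≤ Real.log ((m:ℝ)+2) := Real.log_nonneg (by push_cast; linarith)
    calc ∑ n ∈ Finset.range N, (y n - preds (ewa (netPrior S) Ex) x y n) ^ 2
        ≤ ∑ n ∈ Finset.range N, (y n - Ex i (x n))^2 + 16 * Real.log (1 / netPrior S i) := hreg
      _ ≤ ∑ n ∈ Finset.range N, (y n - (ι f : C(X,ℝ)) (x n))^2 + (N:ℝ) * (4 * (1/2:ℝ)^m)
            + 16 * (2*Real.log ((m:ℝ)+2) + 4*L*m*Real.log 2) := by
          have h16 : 16 * Real.log (1 / netPrior S i) ≤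
              16 * (2*Real.log ((m:ℝ)+2) + 4*L*m*Real.log 2) := by linarith
          linarith
      _ ≤ ∑ n ∈ Finset.range N, (y n - (ι f : C(X,ℝ)) (x n))^2 + 1000 * L * T := by
          have e1 : 32 * Real.log ((m:ℝ)+2) ≤ L * T := by
            have := log_lin L T hLpos hT1 hT163
            linarith
          have e2 : 16 * (4*L*(m:ℝ)*Real.log 2) = 64 * Real.log 2 * (L * (m:ℝ)) := by ring
          have e3 : 16 * (2*Real.log ((m:ℝ)+2) + 4*L*(m:ℝ)*Real.log 2)
              ≤ L*T + 90 * (L*T) := by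
            rw [mul_add, e2]
            have : 45 * (L * (2*T)) = 90 * (L*T) := by ring
            rw [this] at hlog2m
            linarith
          have hLT0 : 0 ≤ L * T := by linarith
          linarith
end

section
/- There is a universal constant C > 0 with the following property. Let X be a compact metric space, let 𝓕 be a compact subset of C(X; ℂ) (continuous complex-valued functions on X with the sup norm), and let M > 0 be such that L := limsup_{ε→0} H_ε(𝓕) / (log₂(1/ε))^M satisfies L ∈ (0, ∞), where H_ε(𝓕) is the metric entropy of 𝓕 in the sup-norm metric. There exists a prediction strategy producing complex predictions that guarantees, for every sequence of signals x₁, x₂, … ∈ X and observations y₁, y₂, … ∈ ℂ with |yₙ| ≤ 1: for all sufficiently large N and all F ∈ 𝓕, Σ_{n=1}^N |yₙ − μₙ|² ≤ Σ_{n=1}^N |yₙ − F(xₙ)|² + C·L·(log₂ N)^M. -/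
open scoped BigOperators
open Filter Real

universe u

noncomputable def clipC (z : ℂ) : ℂ := if ‖z‖ ≤ 1 then z else ‖z‖⁻¹ • z

lemma norm_clipC_le (z : ℂ) : ‖clipC z‖ ≤ 1 := by
  unfold clipC
  split_ifs with h
  · exact h
  · push_neg at h
    have hz : ‖z‖ ≠ 0 := by positivity
    rw [norm_smul, norm_inv, Real.norm_eq_abs, abs_of_nonneg (norm_nonneg z),
      inv_mul_cancel₀ hz]

lemma norm_sub_clipC_le {y : ℂ} (hy : ‖y‖ ≤ 1) (z : ℂ) : ‖y - clipC z‖ ≤ ‖y - z‖ := by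
  unfold clipC
  split_ifs with h
  · exact le_refl _
  · push_neg at h
    have hz0 : (0:ℝ) < ‖z‖ := lt_trans zero_lt_one h
    -- work with normSq
    have key : Complex.normSq (y - ‖z‖⁻¹ • z) ≤ Complex.normSq (y - z) := by
      have hd : y.re * z.re + y.im * z.im ≤ ‖z‖ := by
        have h1 : y.re * z.re + y.im * z.im ≤ ‖y‖ * ‖z‖ := by
          have := Complex.re_le_norm (y * (starRingEnd ℂ) z)
          simp only [Complex.mul_re, Complex.conj_re, Complex.conj_im, map_mul,
            Complex.norm_conj] at this
          calc y.re * z.re + y.im * z.im = (y * (starRingEnd ℂ) z).re := by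
                simp [Complex.mul_re]
            _ ≤ ‖y * (starRingEnd ℂ) z‖ := Complex.re_le_norm _
            _ = ‖y‖ * ‖z‖ := by
                rw [norm_mul, Complex.norm_conj]
        nlinarith [norm_nonneg z]
      have hnz : Complex.normSq z = ‖z‖ ^ 2 := by
        rw [Complex.normSq_eq_norm_sq]
      have hre : (‖z‖⁻¹ • z : ℂ).re = ‖z‖⁻¹ * z.re := by simp [Complex.smul_re]
      have him : (‖z‖⁻¹ • z : ℂ).im = ‖z‖⁻¹ * z.im := by simp [Complex.smul_im]
      have hzsq : z.re^2 + z.im^2 = ‖z‖^2 := by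
        rw [← hnz]; simp [Complex.normSq_apply]; ring
      simp only [Complex.normSq_apply, Complex.sub_re, Complex.sub_im, hre, him]
      have hinv : ‖z‖⁻¹ * ‖z‖ = 1 := inv_mul_cancel₀ (ne_of_gt hz0)
      have h1r : (0:ℝ) ≤ 1 - ‖z‖⁻¹ := by
        have : ‖z‖⁻¹ < 1 := by
          rw [inv_lt_one_iff₀]; right; exact h
        linarith
      have hinv2 : ‖z‖⁻¹ ^ 2 * ‖z‖ ^ 2 = 1 := by
        rw [← mul_pow, hinv, one_pow]
      nlinarith [sq_nonneg (‖z‖ - 1), mul_le_mul_of_nonneg_right hd h1r]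
    have h1 : ‖y - ‖z‖⁻¹ • z‖ = Real.sqrt (Complex.normSq (y - ‖z‖⁻¹ • z)) := by
      rw [Complex.norm_def]
    have h2 : ‖y - z‖ = Real.sqrt (Complex.normSq (y - z)) := by
      rw [Complex.norm_def]
    rw [h1, h2]
    exact Real.sqrt_le_sqrt key

noncomputable def gE (y z : ℂ) : ℝ := Real.exp (-(1/8) * ‖y - z‖ ^ 2)

lemma gE_pos (y z : ℂ) : 0 < gE y z := Real.exp_pos _

lemma gE_le_one (y z : ℂ) : gE y z ≤ 1 := by
  rw [gE, Real.exp_le_one_iff]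
  have : (0:ℝ) ≤ ‖y - z‖ ^ 2 := by positivity
  nlinarith

lemma continuous_gE (y : ℂ) : Continuous (gE y) := by
  unfold gE
  fun_prop

lemma normSq_eq_norm_sq (w : ℂ) : Complex.normSq w = ‖w‖ ^ 2 := by
  rw [Complex.sq_norm]

lemma concaveOn_gE {y : ℂ} (hy : ‖y‖ ≤ 1) :
    ConcaveOn ℝ (Metric.closedBall (0:ℂ) 1) (gE y) := by
  constructor
  · exact convex_closedBall _ _
  intro z₀ hz₀ z₁ hz₁ a b ha hb hab
  set u : ℂ := z₀ - y with hu
  set v : ℂ := z₁ - z₀ with hv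
  set A : ℝ := Complex.normSq v with hA
  set B : ℝ := 2 * (u.re * v.re + u.im * v.im) with hB
  set Cc : ℝ := Complex.normSq u with hC
  set q : ℝ → ℝ := fun t => A * t ^ 2 + B * t + Cc with hq
  set h : ℝ → ℝ := fun t => Real.exp (-(1/8) * q t) with hh
  have hkey : ∀ t : ℝ, gE y (z₀ + t • v) = h t := by
    intro t
    have h1 : ‖y - (z₀ + t • v)‖ ^ 2 = Complex.normSq (y - (z₀ + t • v)) := by
      rw [normSq_eq_norm_sq]
    have h2 : Complex.normSq (y - (z₀ + t • v)) = q t := by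
      simp only [hq, hA, hB, hC, hu, hv, Complex.normSq_apply, Complex.sub_re,
        Complex.sub_im, Complex.add_re, Complex.add_im, Complex.smul_re, Complex.smul_im,
        smul_eq_mul]
      ring
    rw [gE, h1, h2]
  have hq' : ∀ t : ℝ, HasDerivAt q (2 * A * t + B) t := by
    intro t
    have h1 : HasDerivAt (fun t : ℝ => A * t ^ 2) (A * (2 * t)) t := by
      simpa using (hasDerivAt_pow 2 t).const_mul A
    have h2 : HasDerivAt (fun t : ℝ => B * t) B t := by
      simpa using (hasDerivAt_id t).const_mul B
    have := (h1.add h2).add_const Cc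
    exact this.congr_deriv (by ring)
  have hhd : ∀ t : ℝ, HasDerivAt h (Real.exp (-(1/8) * q t) * (-(1/8) * (2 * A * t + B))) t := by
    intro t
    have := ((hq' t).const_mul (-(1/8))).exp
    simpa [hh] using this
  have hconc : ConcaveOn ℝ (Set.Icc (0:ℝ) 1) h := by
    apply concaveOn_of_hasDerivWithinAt2_nonpos (convex_Icc 0 1)
      (f' := fun t => Real.exp (-(1/8) * q t) * (-(1/8) * (2 * A * t + B)))
      (f'' := fun t => Real.exp (-(1/8) * q t) *
        ((-(1/8) * (2 * A * t + B)) ^ 2 + (-(1/8)) * (2 * A)))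
    · exact fun t _ => ((hhd t).continuousAt).continuousWithinAt
    · intro t _
      exact (hhd t).hasDerivWithinAt
    · intro t _
      have hlin : HasDerivAt (fun t : ℝ => -(1/8) * (2 * A * t + B)) (-(1/8) * (2 * A)) t := by
        have h2 : HasDerivAt (fun t : ℝ => 2 * A * t + B) (2 * A) t := by
          simpa using ((hasDerivAt_id t).const_mul (2 * A)).add_const B
        exact h2.const_mul (-(1/8))
      have hexp : HasDerivAt (fun t : ℝ => Real.exp (-(1/8) * q t))
          (Real.exp (-(1/8) * q t) * (-(1/8) * (2 * A * t + B))) t := by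
        have := ((hq' t).const_mul (-(1/8))).exp
        simpa using this
      have hmul := hexp.mul hlin
      have heq : Real.exp (-(1/8) * q t) * (-(1/8) * (2 * A * t + B)) * (-(1/8) * (2 * A * t + B))
          + Real.exp (-(1/8) * q t) * (-(1/8) * (2 * A)) =
          Real.exp (-(1/8) * q t) * ((-(1/8) * (2 * A * t + B)) ^ 2 + (-(1/8)) * (2 * A)) := by
        ring
      rw [← heq]
      exact hmul.hasDerivWithinAt
    · intro t ht
      rw [interior_Icc] at ht
      have hbound : (2 * A * t + B) ^ 2 ≤ 16 * A := by
        have hdot : 2 * A * t + B = 2 * ((u + t • v).re * v.re + (u + t • v).im * v.im) := by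
          simp only [hA, hB, Complex.normSq_apply, Complex.add_re, Complex.add_im,
            Complex.smul_re, Complex.smul_im, smul_eq_mul]
          ring
        have hCS : ((u + t • v).re * v.re + (u + t • v).im * v.im) ^ 2 ≤
            Complex.normSq (u + t • v) * Complex.normSq v := by
          simp only [Complex.normSq_apply]
          nlinarith [sq_nonneg ((u + t • v).re * v.im - (u + t • v).im * v.re)]
        have hmem : z₀ + t • v ∈ Metric.closedBall (0:ℂ) 1 := by
          have hcv := convex_closedBall (0:ℂ) 1 hz₀ hz₁ (by linarith [ht.2] : (0:ℝ) ≤ 1 - t)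
            (le_of_lt ht.1) (by ring)
          have heq2 : (1 - t) • z₀ + t • z₁ = z₀ + t • v := by
            rw [hv, smul_sub, sub_smul, one_smul]
            abel
          rwa [heq2] at hcv
        have hnorm : ‖u + t • v‖ ≤ 2 := by
          have h1 : u + t • v = (z₀ + t • v) - y := by rw [hu]; ring
          rw [h1]
          have h2 : ‖z₀ + t • v‖ ≤ 1 := by simpa using Metric.mem_closedBall.1 hmem
          calc ‖(z₀ + t • v) - y‖ ≤ ‖z₀ + t • v‖ + ‖y‖ := norm_sub_le _ _
            _ ≤ 2 := by linarith
        have hnsq : Complex.normSq (u + t • v) ≤ 4 := by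
          rw [normSq_eq_norm_sq]
          nlinarith [norm_nonneg (u + t • v)]
        have hAnn : (0:ℝ) ≤ A := Complex.normSq_nonneg v
        calc (2 * A * t + B) ^ 2
            = 4 * ((u + t • v).re * v.re + (u + t • v).im * v.im) ^ 2 := by rw [hdot]; ring
          _ ≤ 4 * (Complex.normSq (u + t • v) * Complex.normSq v) := by linarith [hCS]
          _ ≤ 16 * A := by nlinarith [Complex.normSq_nonneg v]
      have hexp_pos : (0:ℝ) < Real.exp (-(1/8) * q t) := Real.exp_pos _
      have : (-(1/8) * (2 * A * t + B)) ^ 2 + (-(1/8)) * (2 * A) ≤ 0 := by nlinarith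
      nlinarith
  have h0m : (0:ℝ) ∈ Set.Icc (0:ℝ) 1 := Set.mem_Icc.2 ⟨le_refl 0, zero_le_one⟩
  have h1m : (1:ℝ) ∈ Set.Icc (0:ℝ) 1 := Set.mem_Icc.2 ⟨zero_le_one, le_refl 1⟩
  have hineq := hconc.2 h0m h1m ha hb hab
  have e0 : gE y z₀ = h 0 := by
    have := hkey 0; simpa using this
  have e1 : gE y z₁ = h 1 := by
    have := hkey 1
    have h1 : z₀ + (1:ℝ) • v = z₁ := by rw [hv, one_smul]; abel
    rwa [h1] at this
  have eb : gE y (a • z₀ + b • z₁) = h b := by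
    have := hkey b
    have h1 : z₀ + b • v = a • z₀ + b • z₁ := by
      have hab' : a = 1 - b := by linarith
      rw [hv, hab', smul_sub, sub_smul, one_smul]
      abel
    rwa [h1] at this
  have hsmul : a • (0:ℝ) + b • (1:ℝ) = b := by simp
  rw [e0, e1, eb]
  rw [hsmul] at hineq
  exact hineq

lemma tsum_jensen {I : Type*} {s : Set ℂ} {g : ℂ → ℝ}
    (hg : ConcaveOn ℝ s g) (hgc : Continuous g)
    (q : I → ℝ) (hq0 : ∀ i, 0 ≤ q i) (hq1 : HasSum q 1)
    (z : I → ℂ) (hz : ∀ i, z i ∈ s)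
    (hzs : Summable (fun i => q i • z i))
    (hgs : Summable (fun i => q i * g (z i))) :
    ∑' i, q i * g (z i) ≤ g (∑' i, q i • z i) := by
  have hT : Tendsto (fun t : Finset I => ∑ i ∈ t, q i) atTop (nhds 1) := hq1
  have hZ : Tendsto (fun t : Finset I => ∑ i ∈ t, q i • z i) atTop (nhds (∑' i, q i • z i)) :=
    hzs.hasSum
  have hG : Tendsto (fun t : Finset I => ∑ i ∈ t, q i * g (z i)) atTop
      (nhds (∑' i, q i * g (z i))) := hgs.hasSum
  have hpos : ∀ᶠ t : Finset I in atTop, 0 < ∑ i ∈ t, q i :=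
    hT.eventually (eventually_gt_nhds zero_lt_one)
  have key : ∀ᶠ t : Finset I in atTop,
      (∑ i ∈ t, q i * g (z i)) ≤
        (∑ i ∈ t, q i) * g ((∑ i ∈ t, q i)⁻¹ • ∑ i ∈ t, q i • z i) := by
    filter_upwards [hpos] with t ht
    set T := ∑ i ∈ t, q i with hTdef
    have hje := hg.le_map_sum (t := t) (w := fun i => q i / T) (p := z)
      (fun i _ => div_nonneg (hq0 i) (le_of_lt ht))
      (by rw [← Finset.sum_div]; field_simp; exact hTdef.symm)
      (fun i _ => hz i)
    have h1 : ∑ i ∈ t, (q i / T) • g (z i) = T⁻¹ * ∑ i ∈ t, q i * g (z i) := by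
      rw [Finset.mul_sum]
      refine Finset.sum_congr rfl fun i _ => ?_
      rw [smul_eq_mul]
      field_simp
    have h2 : ∑ i ∈ t, (q i / T) • z i = T⁻¹ • ∑ i ∈ t, q i • z i := by
      rw [Finset.smul_sum]
      refine Finset.sum_congr rfl fun i _ => ?_
      rw [div_eq_inv_mul, mul_smul]
    rw [h1, h2] at hje
    calc ∑ i ∈ t, q i * g (z i) = T * (T⁻¹ * ∑ i ∈ t, q i * g (z i)) := by
          field_simp
      _ ≤ T * g (T⁻¹ • ∑ i ∈ t, q i • z i) := by
          exact mul_le_mul_of_nonneg_left hje (le_of_lt ht)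
  have hRHS : Tendsto (fun t : Finset I =>
      (∑ i ∈ t, q i) * g ((∑ i ∈ t, q i)⁻¹ • ∑ i ∈ t, q i • z i)) atTop
      (nhds (g (∑' i, q i • z i))) := by
    have hinv : Tendsto (fun t : Finset I => (∑ i ∈ t, q i)⁻¹) atTop (nhds 1) := by
      simpa using hT.inv₀ one_ne_zero
    have harg : Tendsto (fun t : Finset I => (∑ i ∈ t, q i)⁻¹ • ∑ i ∈ t, q i • z i) atTop
        (nhds (∑' i, q i • z i)) := by
      have := hinv.smul hZ
      simpa using this
    have := hT.mul ((hgc.tendsto _).comp harg)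
    simpa using this
  exact le_of_tendsto_of_tendsto hG hRHS key


noncomputable def ewaV {I : Type*} (w : I → ℝ) (p : I → ℕ → ℂ) (y : ℕ → ℂ)
    (i : I) (n : ℕ) : ℝ :=
  w i * Real.exp (-(1/8) * ∑ k ∈ Finset.range n, ‖y k - p i k‖ ^ 2)

noncomputable def ewaPred {I : Type*} (w : I → ℝ) (p : I → ℕ → ℂ) (y : ℕ → ℂ) (n : ℕ) : ℂ :=
  (∑' i, ewaV w p y i n)⁻¹ • ∑' i, ewaV w p y i n • p i n

lemma ewa_core {I : Type*} [Nonempty I] (w : I → ℝ) (hw : ∀ i, 0 < w i) (hws : Summable w)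
    (p : I → ℕ → ℂ) (hp : ∀ i n, ‖p i n‖ ≤ 1) (y : ℕ → ℂ) (hy : ∀ n, ‖y n‖ ≤ 1)
    (N : ℕ) (i : I) :
    ∑ n ∈ Finset.range N, ‖y n - ewaPred w p y n‖ ^ 2 ≤
      (∑ n ∈ Finset.range N, ‖y n - p i n‖ ^ 2)
        + 8 * (Real.log (∑' j, w j) - Real.log (w i)) := by
  set V : I → ℕ → ℝ := ewaV w p y with hV
  set W : ℕ → ℝ := fun n => ∑' j, V j n with hW
  have hVpos : ∀ j n, 0 < V j n := fun j n => mul_pos (hw j) (Real.exp_pos _)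
  have hVle : ∀ j n, V j n ≤ w j := by
    intro j n
    rw [hV, ewaV]
    have h1 : Real.exp (-(1/8) * ∑ k ∈ Finset.range n, ‖y k - p j k‖ ^ 2) ≤ 1 := by
      rw [Real.exp_le_one_iff]
      have : (0:ℝ) ≤ ∑ k ∈ Finset.range n, ‖y k - p j k‖ ^ 2 :=
        Finset.sum_nonneg fun k _ => by positivity
      nlinarith
    nlinarith [hw j]
  have hVsum : ∀ n, Summable (fun j => V j n) := fun n =>
    Summable.of_nonneg_of_le (fun j => le_of_lt (hVpos j n)) (fun j => hVle j n) hws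
  have hWpos : ∀ n, 0 < W n := by
    intro n
    obtain ⟨i₀⟩ := ‹Nonempty I›
    exact lt_of_lt_of_le (hVpos i₀ n)
      (Summable.le_tsum (hVsum n) i₀ fun j _ => le_of_lt (hVpos j n))
  have hVsucc : ∀ j n, V j (n+1) = V j n * gE (y n) (p j n) := by
    intro j n
    rw [hV, ewaV, ewaV, gE, Finset.sum_range_succ, mul_assoc, ← Real.exp_add]
    congr 2
    ring
  have hstep : ∀ n, Real.log (W (n+1)) - Real.log (W n) ≤
      -(1/8) * ‖y n - ewaPred w p y n‖ ^ 2 := by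
    intro n
    set q : I → ℝ := fun j => V j n / W n with hqdef
    have hq0 : ∀ j, 0 ≤ q j := fun j => div_nonneg (le_of_lt (hVpos j n)) (le_of_lt (hWpos n))
    have hq1 : HasSum q 1 := by
      have := (hVsum n).hasSum.div_const (W n)
      rwa [div_self (ne_of_gt (hWpos n))] at this
    have hqsum : Summable q := hq1.summable
    have hzs : Summable (fun j => q j • p j n) := by
      apply Summable.of_norm_bounded hqsum
      intro j
      rw [norm_smul, Real.norm_eq_abs, abs_of_nonneg (hq0 j)]
      nlinarith [hp j n, hq0 j, norm_nonneg (p j n)]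
    have hgs : Summable (fun j => q j * gE (y n) (p j n)) := by
      apply Summable.of_nonneg_of_le
        (fun j => mul_nonneg (hq0 j) (le_of_lt (gE_pos _ _))) _ hqsum
      intro j
      nlinarith [gE_le_one (y n) (p j n), hq0 j, gE_pos (y n) (p j n)]
    have hjen := tsum_jensen (concaveOn_gE (hy n)) (continuous_gE (y n)) q hq0 hq1
      (fun j => p j n) (fun j => mem_closedBall_zero_iff.2 (hp j n)) hzs hgs
    have hmu : ∑' j, q j • p j n = ewaPred w p y n := by
      rw [ewaPred]
      have h1 : ∀ j, q j • p j n = (W n)⁻¹ • (V j n • p j n) := by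
        intro j
        show (V j n / W n) • p j n = (W n)⁻¹ • (V j n • p j n)
        rw [div_eq_inv_mul, mul_smul]
      rw [tsum_congr h1]
      rw [Summable.tsum_const_smul _ ?_]
      · apply Summable.of_norm_bounded (hVsum n)
        intro j
        rw [norm_smul, Real.norm_eq_abs, abs_of_nonneg (le_of_lt (hVpos j n))]
        nlinarith [hp j n, hVpos j n, norm_nonneg (p j n)]
    have hLHS : ∑' j, q j * gE (y n) (p j n) = W (n+1) / W n := by
      have h1 : ∀ j, q j * gE (y n) (p j n) = V j (n+1) / W n := by
        intro j
        show V j n / W n * gE (y n) (p j n) = V j (n+1) / W n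
        rw [hVsucc]
        ring
      rw [tsum_congr h1, tsum_div_const]
    rw [hmu, hLHS] at hjen
    have hlog := Real.log_le_log (div_pos (hWpos (n+1)) (hWpos n)) hjen
    rw [Real.log_div (ne_of_gt (hWpos (n+1))) (ne_of_gt (hWpos n))] at hlog
    rw [gE, Real.log_exp] at hlog
    exact hlog
  -- telescoping
  have htel : Real.log (W N) - Real.log (W 0) ≤
      -(1/8) * ∑ n ∈ Finset.range N, ‖y n - ewaPred w p y n‖ ^ 2 := by
    have h1 : ∑ n ∈ Finset.range N, (Real.log (W (n+1)) - Real.log (W n)) =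
        Real.log (W N) - Real.log (W 0) := Finset.sum_range_sub (fun n => Real.log (W n)) N
    rw [← h1, Finset.mul_sum]
    exact Finset.sum_le_sum fun n _ => hstep n
  -- lower bound on log W N
  have hlow : Real.log (w i) + (-(1/8) * ∑ k ∈ Finset.range N, ‖y k - p i k‖ ^ 2) ≤
      Real.log (W N) := by
    have h1 : V i N ≤ W N := Summable.le_tsum (hVsum N) i fun j _ => le_of_lt (hVpos j N)
    have h2 := Real.log_le_log (hVpos i N) h1
    rw [hV, ewaV, Real.log_mul (ne_of_gt (hw i)) (ne_of_gt (Real.exp_pos _)),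
      Real.log_exp] at h2
    exact h2
  have hW0 : W 0 = ∑' j, w j := by
    apply tsum_congr
    intro j
    simp [hV, ewaV]
  rw [hW0] at htel
  linarith

lemma ratio_rpow_tendsto_one (c M : ℝ) :
    Filter.Tendsto (fun t : ℝ => ((t + c) / t) ^ M) atTop (nhds 1) := by
  have h1 : Filter.Tendsto (fun t : ℝ => (t + c) / t) atTop (nhds 1) := by
    have h2 : Filter.Tendsto (fun t : ℝ => 1 + c * t⁻¹) atTop (nhds 1) := by
      have := tendsto_inv_atTop_zero.const_mul c
      have h3 := this.const_add (1:ℝ)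
      simpa using h3
    apply h2.congr'
    filter_upwards [eventually_gt_atTop (0:ℝ)] with t ht
    field_simp
  have := h1.rpow_const (p := M) (Or.inl one_ne_zero)
  simpa using this

lemma eventual_bound (K₀ L M : ℝ) (hL : 0 < L) (hM : 0 < M) :
    ∀ᶠ t : ℝ in atTop, K₀ + 16 * Real.log (t + 2) + 16 * Real.log 2 * L * (t + 1) ^ M
      ≤ 100 * L * t ^ M := by
  have hMtop : Filter.Tendsto (fun t : ℝ => t ^ M) atTop atTop := tendsto_rpow_atTop hM
  -- part A : K₀ + 16 log (t+2) ≤ 50 L t^M eventually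
  have hA : ∀ᶠ t : ℝ in atTop, K₀ + 16 * Real.log (t + 2) ≤ 50 * L * t ^ M := by
    have hinv : Filter.Tendsto (fun t : ℝ => K₀ * (t ^ M)⁻¹) atTop (nhds 0) := by
      simpa using (hMtop.inv_tendsto_atTop).const_mul K₀
    have hlog : Filter.Tendsto (fun t : ℝ => Real.log (t + 2) / t ^ M) atTop (nhds 0) := by
      have h1 : Filter.Tendsto (fun t : ℝ => Real.log (t + 2) / (t + 2) ^ M) atTop (nhds 0) := by
        have h2 := (isLittleO_log_rpow_atTop hM).tendsto_div_nhds_zero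
        exact h2.comp (tendsto_atTop_add_const_right atTop 2 tendsto_id)
      have h3 := h1.mul (ratio_rpow_tendsto_one 2 M)
      rw [mul_one] at h3
      apply h3.congr'
      filter_upwards [eventually_gt_atTop (0:ℝ)] with t ht
      have ht2 : (0:ℝ) < t + 2 := by linarith
      rw [Real.div_rpow (by linarith) (le_of_lt ht)]
      field_simp
    have hsum : Filter.Tendsto (fun t : ℝ => K₀ * (t ^ M)⁻¹ + 16 * (Real.log (t + 2) / t ^ M))
        atTop (nhds 0) := by
      have := hinv.add (hlog.const_mul 16)
      simpa using this
    have hev : ∀ᶠ t : ℝ in atTop,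
        K₀ * (t ^ M)⁻¹ + 16 * (Real.log (t + 2) / t ^ M) < 50 * L :=
      hsum.eventually (eventually_lt_nhds (by positivity))
    filter_upwards [hev, eventually_gt_atTop (0:ℝ)] with t ht htpos
    have htM : (0:ℝ) < t ^ M := Real.rpow_pos_of_pos htpos M
    have := mul_lt_mul_of_pos_right ht htM
    have heq : (K₀ * (t ^ M)⁻¹ + 16 * (Real.log (t + 2) / t ^ M)) * t ^ M
        = K₀ + 16 * Real.log (t + 2) := by
      field_simp
    rw [heq] at this
    nlinarith
  -- part B : 16 log 2 L (t+1)^M ≤ 50 L t^M eventually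
  have hB : ∀ᶠ t : ℝ in atTop, 16 * Real.log 2 * L * (t + 1) ^ M ≤ 50 * L * t ^ M := by
    have hev : ∀ᶠ t : ℝ in atTop, ((t + 1) / t) ^ M < 2 :=
      (ratio_rpow_tendsto_one 1 M).eventually (eventually_lt_nhds one_lt_two)
    filter_upwards [hev, eventually_gt_atTop (0:ℝ)] with t ht htpos
    have htM : (0:ℝ) < t ^ M := Real.rpow_pos_of_pos htpos M
    have heq : ((t + 1) / t) ^ M = (t + 1) ^ M / t ^ M :=
      Real.div_rpow (by linarith) (le_of_lt htpos) M
    rw [heq, div_lt_iff₀ htM] at ht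
    have hlog2 : Real.log 2 ≤ 1 := by
      have := Real.log_le_sub_one_of_pos (by norm_num : (0:ℝ) < 2)
      linarith
    have hlog2' : (0:ℝ) < Real.log 2 := Real.log_pos one_lt_two
    have hp1 : (0:ℝ) ≤ (t + 1) ^ M := Real.rpow_nonneg (by linarith) M
    have h1 : 16 * Real.log 2 * L ≤ 16 * L := by nlinarith
    have h2 : 16 * Real.log 2 * L * (t + 1) ^ M ≤ 16 * L * (t + 1) ^ M :=
      mul_le_mul_of_nonneg_right h1 hp1
    have h3 : 16 * L * (t + 1) ^ M ≤ 16 * L * (2 * t ^ M) :=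
      mul_le_mul_of_nonneg_left (le_of_lt ht) (by positivity)
    have h4 : (0:ℝ) ≤ L * t ^ M := by positivity
    nlinarith
  filter_upwards [hA, hB] with t hA hB
  linarith

lemma list_range_map_sum (f : ℕ → ℝ) (n : ℕ) :
    ((List.range n).map f).sum = ∑ k ∈ Finset.range n, f k := by
  induction n with
  | zero => simp
  | succ n ih =>
    rw [List.range_succ, List.map_append, List.sum_append, Finset.sum_range_succ, ih]
    simp

/-- Corollary 4: for a compact class `𝓕 ⊆ C(X; ℂ)` with
`L = limsup_{ε→0} H_ε(𝓕)/log₂ᴹ(1/ε) ∈ (0,∞)`, the regret is `O(L logᴹ N)`. -/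
theorem stmt8 : ∃ C : ℝ, 0 < C ∧
    ∀ (X : Type u) [MetricSpace X] [CompactSpace X] (𝓕 : Set C(X, ℂ)) (M L : ℝ),
      0 < M →
      IsCompact 𝓕 →
      Filter.IsBoundedUnder (· ≤ ·) (nhdsWithin 0 (Set.Ioi 0))
        (fun ε : ℝ => metricEntropy 𝓕 ε / Real.logb 2 (1 / ε) ^ M) →
      L = Filter.limsup (fun ε : ℝ => metricEntropy 𝓕 ε / Real.logb 2 (1 / ε) ^ M)
            (nhdsWithin 0 (Set.Ioi 0)) →
      0 < L →
      ∃ σ : List (X × ℂ) → X → ℂ,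
        ∀ x : ℕ → X, ∀ y : ℕ → ℂ, (∀ n, ‖y n‖ ≤ 1) →
          ∃ N₀ : ℕ, ∀ N ≥ N₀, ∀ F ∈ 𝓕,
            ∑ n ∈ Finset.range N, ‖y n - preds σ x y n‖ ^ 2 ≤
              ∑ n ∈ Finset.range N, ‖y n - F (x n)‖ ^ 2 +
                C * L * Real.logb 2 N ^ M := by
  refine ⟨100, by norm_num, ?_⟩
  intro X _ _ 𝓕 M L hM hcpt hbdd hLdef hLpos
  by_cases hne : 𝓕.Nonempty
  swap
  · exact ⟨fun _ _ => 0, fun x y hy => ⟨0, fun N _ F hF => absurd ⟨F, hF⟩ hne⟩⟩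
  -- a uniform bound on the class
  obtain ⟨R₀, hR₀⟩ := isBounded_iff_forall_norm_le.1 hcpt.isBounded
  set R : ℝ := max R₀ 0 with hRdef
  have hR : ∀ F ∈ 𝓕, ‖F‖ ≤ R := fun F hF => le_trans (hR₀ F hF) (le_max_left _ _)
  have hR0 : (0:ℝ) ≤ R := le_max_right _ _
  -- minimal nets at scales 2⁻ʲ
  have hexists : ∀ j : ℕ, ∃ S : Finset C(X, ℂ), ↑S ⊆ 𝓕 ∧
      S.card = coveringNumber 𝓕 (((2:ℝ)^j)⁻¹) ∧
      ∀ a ∈ 𝓕, ∃ b ∈ S, dist a b ≤ ((2:ℝ)^j)⁻¹ := by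
    intro j
    have hε : (0:ℝ) < ((2:ℝ)^j)⁻¹ := by positivity
    obtain ⟨t, hts, htf, htcover⟩ :=
      Metric.finite_approx_of_totallyBounded hcpt.totallyBounded _ hε
    have hmem : htf.toFinset.card ∈ {n : ℕ | ∃ S : Finset C(X, ℂ), ↑S ⊆ 𝓕 ∧ S.card = n ∧
        ∀ a ∈ 𝓕, ∃ b ∈ S, dist a b ≤ ((2:ℝ)^j)⁻¹} := by
      refine ⟨htf.toFinset, by simpa using hts, rfl, ?_⟩
      intro a ha
      obtain ⟨b, hb, hab⟩ := Set.mem_iUnion₂.1 (htcover ha)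
      exact ⟨b, htf.mem_toFinset.2 hb, le_of_lt (Metric.mem_ball.1 hab)⟩
    have hsInf := Nat.sInf_mem (Set.nonempty_of_mem hmem)
    obtain ⟨S, hS1, hS2, hS3⟩ := hsInf
    exact ⟨S, hS1, hS2, hS3⟩
  choose S hSsub hScard hSnet using hexists
  have hSne : ∀ j, (S j).Nonempty := by
    intro j
    obtain ⟨F₀, hF₀⟩ := hne
    obtain ⟨b, hb, _⟩ := hSnet j F₀ hF₀
    exact ⟨b, hb⟩
  have hcardpos : ∀ j, 0 < ((S j).card : ℝ) := fun j => by
    exact_mod_cast Finset.card_pos.2 (hSne j)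
  -- entropy bound from the limsup hypothesis
  have hev : ∀ᶠ ε in nhdsWithin 0 (Set.Ioi 0),
      metricEntropy 𝓕 ε / Real.logb 2 (1 / ε) ^ M < 2 * L := by
    apply Filter.eventually_lt_of_limsup_lt _ hbdd
    rw [← hLdef]
    linarith
  rw [eventually_nhdsWithin_iff, Metric.eventually_nhds_iff] at hev
  obtain ⟨δ, hδpos, hδ⟩ := hev
  obtain ⟨j₁, hj₁⟩ : ∃ j₁ : ℕ, ((2:ℝ)^j₁)⁻¹ < δ := by
    obtain ⟨n, hn⟩ := exists_pow_lt_of_lt_one hδpos (by norm_num : (2:ℝ)⁻¹ < 1)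
    exact ⟨n, by rwa [inv_pow] at hn⟩
  have hEnt : ∀ j : ℕ, 1 ≤ j → j₁ ≤ j →
      Real.log ((S j).card : ℝ) ≤ 2 * L * (j:ℝ) ^ M * Real.log 2 := by
    intro j hj1 hjj₁
    have hεpos : (0:ℝ) < ((2:ℝ)^j)⁻¹ := by positivity
    have hεle : ((2:ℝ)^j)⁻¹ ≤ ((2:ℝ)^j₁)⁻¹ := by
      apply inv_anti₀ (by positivity)
      exact pow_le_pow_right₀ (by norm_num) hjj₁
    have hεδ : dist (((2:ℝ)^j)⁻¹) 0 < δ := by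
      rw [Real.dist_eq, sub_zero, abs_of_pos hεpos]
      linarith
    have hf := hδ hεδ (Set.mem_Ioi.2 hεpos)
    have h1ε : 1 / ((2:ℝ)^j)⁻¹ = (2:ℝ)^j := by rw [one_div, inv_inv]
    have hlogb2 : Real.logb 2 ((2:ℝ)^j) = (j:ℝ) := by
      rw [Real.logb_pow, Real.logb_self_eq_one one_lt_two, mul_one]
    rw [h1ε, hlogb2] at hf
    have hjpos : (0:ℝ) < (j:ℝ) := by exact_mod_cast hj1
    have hjM : (0:ℝ) < (j:ℝ) ^ M := Real.rpow_pos_of_pos hjpos M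
    rw [div_lt_iff₀ hjM] at hf
    have hME : metricEntropy 𝓕 (((2:ℝ)^j)⁻¹) = Real.logb 2 ((S j).card : ℝ) := by
      rw [metricEntropy, ← hScard j]
    rw [hME] at hf
    have hlog2pos : (0:ℝ) < Real.log 2 := Real.log_pos one_lt_two
    rw [Real.logb, div_lt_iff₀ hlog2pos] at hf
    linarith
  -- the expert index type and prior weights
  let I : Type u := (j : ℕ) × {G : C(X, ℂ) // G ∈ S j}
  haveI : Nonempty I := ⟨⟨0, ⟨(hSne 0).choose, (hSne 0).choose_spec⟩⟩⟩
  let w : I → ℝ := fun i => (((i.1:ℝ) + 1) ^ 2 * ((S i.1).card : ℝ))⁻¹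
  have hw : ∀ i, 0 < w i := by
    intro i
    have := hcardpos i.1
    positivity
  have hwsum : Summable w := by
    apply (summable_sigma_of_nonneg (fun i => le_of_lt (hw i))).2
    constructor
    · intro j
      exact Summable.of_finite
    · have heq : (fun j : ℕ => ∑' (G : {G : C(X, ℂ) // G ∈ S j}),
          w ⟨j, G⟩) = fun j : ℕ => (((j:ℝ) + 1) ^ 2)⁻¹ := by
        funext j
        rw [tsum_fintype]
        have hwc : ∀ b : {G : C(X, ℂ) // G ∈ S j},
            w ⟨j, b⟩ = (((j:ℝ) + 1) ^ 2 * ((S j).card : ℝ))⁻¹ := fun b => rfl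
        rw [Finset.sum_congr rfl (fun b _ => hwc b), Finset.sum_const]
        have hcard : (Finset.univ : Finset {G : C(X, ℂ) // G ∈ S j}).card = (S j).card :=
          Fintype.card_coe _
        rw [hcard, nsmul_eq_mul]
        have h1 := hcardpos j
        field_simp
      rw [heq]
      have h1 : Summable (fun n : ℕ => ((n:ℝ) ^ 2)⁻¹) :=
        Real.summable_nat_pow_inv.2 one_lt_two
      have h2 := (summable_nat_add_iff 1).2 h1
      apply h2.congr
      intro n
      push_cast
      ring_nf
  set W₀ : ℝ := ∑' i, w i with hW₀def
  set K₀ : ℝ := (3 + 2 * R) + 8 * Real.log W₀ with hK₀def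
  -- the strategy
  refine ⟨fun h xs =>
    (∑' i : I, w i * Real.exp (-(1/8) *
        (h.map (fun pr => ‖pr.2 - clipC ((i.2 : C(X, ℂ)) pr.1)‖ ^ 2)).sum))⁻¹ •
      ∑' i : I, (w i * Real.exp (-(1/8) *
        (h.map (fun pr => ‖pr.2 - clipC ((i.2 : C(X, ℂ)) pr.1)‖ ^ 2)).sum)) •
          clipC ((i.2 : C(X, ℂ)) xs), ?_⟩
  intro x y hy
  set p : I → ℕ → ℂ := fun i n => clipC ((i.2 : C(X, ℂ)) (x n)) with hpdef
  have hpred : ∀ n, preds (fun h xs =>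
      (∑' i : I, w i * Real.exp (-(1/8) *
          (h.map (fun pr => ‖pr.2 - clipC ((i.2 : C(X, ℂ)) pr.1)‖ ^ 2)).sum))⁻¹ •
        ∑' i : I, (w i * Real.exp (-(1/8) *
          (h.map (fun pr => ‖pr.2 - clipC ((i.2 : C(X, ℂ)) pr.1)‖ ^ 2)).sum)) •
            clipC ((i.2 : C(X, ℂ)) xs)) x y n = ewaPred w p y n := by
    intro n
    have hls : ∀ i : I, ((((List.range n).map fun k => (x k, y k)).map
        (fun pr => ‖pr.2 - clipC ((i.2 : C(X, ℂ)) pr.1)‖ ^ 2)).sum) =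
        ∑ k ∈ Finset.range n, ‖y k - p i k‖ ^ 2 := by
      intro i
      rw [List.map_map]
      exact list_range_map_sum _ n
    simp only [preds]
    rw [ewaPred]
    congr 1
    · congr 1
      apply tsum_congr
      intro i
      rw [ewaV, hls i]
    · apply tsum_congr
      intro i
      rw [ewaV, hls i]
  have hcore := ewa_core w hw hwsum p (fun i n => norm_clipC_le _) y hy
  -- choose N₀
  have hfinal : ∀ᶠ N : ℕ in atTop,
      2 ≤ N ∧ (2:ℕ) ^ (max j₁ 1) ≤ N ∧
      (K₀ + 16 * Real.log (Real.logb 2 (N:ℝ) + 2) +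
        16 * Real.log 2 * L * (Real.logb 2 (N:ℝ) + 1) ^ M
          ≤ 100 * L * Real.logb 2 (N:ℝ) ^ M) := by
    refine (eventually_ge_atTop 2).and ((eventually_ge_atTop _).and ?_)
    have hE := eventual_bound K₀ L M hLpos hM
    have htt : Tendsto (fun N : ℕ => Real.logb 2 (N:ℝ)) atTop atTop :=
      (Real.tendsto_logb_atTop one_lt_two).comp tendsto_natCast_atTop_atTop
    exact htt.eventually hE
  obtain ⟨N₀, hN₀⟩ := eventually_atTop.1 hfinal
  refine ⟨N₀, ?_⟩
  intro N hN F hF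
  obtain ⟨hN2, hNpow, hnum⟩ := hN₀ N hN
  set j : ℕ := Nat.clog 2 N with hjdef
  have hjge : max j₁ 1 ≤ j := by
    calc max j₁ 1 = Nat.clog 2 (2 ^ max j₁ 1) := (Nat.clog_pow 2 _ one_lt_two).symm
      _ ≤ j := Nat.clog_mono_right 2 hNpow
  have hj1 : 1 ≤ j := le_trans (le_max_right _ _) hjge
  have hjj₁ : j₁ ≤ j := le_trans (le_max_left _ _) hjge
  set t : ℝ := Real.logb 2 (N:ℝ) with htdef
  have ht0 : (0:ℝ) ≤ t := Real.logb_nonneg one_lt_two (by exact_mod_cast le_trans one_le_two hN2)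
  have hjle : (j:ℝ) ≤ t + 1 := by
    have h2 := Nat.pow_pred_clog_lt_self one_lt_two (by omega : 1 < N)
    have h3 : ((2:ℝ)) ^ (j - 1 : ℕ) < (N:ℝ) := by exact_mod_cast h2
    have h4 := Real.logb_lt_logb one_lt_two (by positivity) h3
    have h5 : Real.logb 2 ((2:ℝ) ^ (j - 1 : ℕ)) = ((j - 1 : ℕ):ℝ) := by
      rw [Real.logb_pow, Real.logb_self_eq_one one_lt_two, mul_one]
    rw [h5] at h4
    have h6 : ((j - 1 : ℕ):ℝ) = (j:ℝ) - 1 := by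
      have : (1:ℕ) ≤ j := hj1
      push_cast [Nat.cast_sub this]
      ring
    rw [h6] at h4
    rw [htdef]
    linarith
  -- the comparison expert
  obtain ⟨G, hGmem, hGdist⟩ := hSnet j F hF
  set i : I := ⟨j, ⟨G, hGmem⟩⟩ with hidef
  have hNε : (N:ℝ) * ((2:ℝ)^j)⁻¹ ≤ 1 := by
    have h1 : (N:ℕ) ≤ 2 ^ j := Nat.le_pow_clog one_lt_two N
    have h2 : (N:ℝ) ≤ (2:ℝ) ^ j := by exact_mod_cast h1
    have h3 : (0:ℝ) < (2:ℝ)^j := by positivity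
    rw [← div_le_one h3] at h2
    rwa [← div_eq_mul_inv]
  have hcomp : ∑ n ∈ Finset.range N, ‖y n - p i n‖ ^ 2 ≤
      (∑ n ∈ Finset.range N, ‖y n - F (x n)‖ ^ 2) + (3 + 2 * R) := by
    have hpt : ∀ n, ‖y n - p i n‖ ^ 2 ≤
        ‖y n - F (x n)‖ ^ 2 + (3 + 2 * R) * ((2:ℝ)^j)⁻¹ := by
      intro n
      have h1 : ‖y n - p i n‖ ≤ ‖y n - G (x n)‖ := norm_sub_clipC_le (hy n) _
      have h2 : ‖y n - G (x n)‖ ≤ ‖y n - F (x n)‖ + ((2:ℝ)^j)⁻¹ := by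
        have h3 : ‖F (x n) - G (x n)‖ ≤ ((2:ℝ)^j)⁻¹ := by
          rw [← dist_eq_norm]
          exact le_trans (ContinuousMap.dist_apply_le_dist (x n)) hGdist
        calc ‖y n - G (x n)‖ = ‖(y n - F (x n)) + (F (x n) - G (x n))‖ := by ring_nf
          _ ≤ ‖y n - F (x n)‖ + ‖F (x n) - G (x n)‖ := norm_add_le _ _
          _ ≤ ‖y n - F (x n)‖ + ((2:ℝ)^j)⁻¹ := by linarith
      have ha : ‖y n - F (x n)‖ ≤ 1 + R := by
        calc ‖y n - F (x n)‖ ≤ ‖y n‖ + ‖F (x n)‖ := norm_sub_le _ _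
          _ ≤ 1 + R := by
              have := ContinuousMap.norm_coe_le_norm F (x n)
              have := hR F hF
              have := hy n
              linarith
      have hε1 : ((2:ℝ)^j)⁻¹ ≤ 1 := by
        rw [inv_le_one_iff₀]
        right
        exact one_le_pow₀ (by norm_num)
      have hεpos : (0:ℝ) < ((2:ℝ)^j)⁻¹ := by positivity
      have h0a : (0:ℝ) ≤ ‖y n - F (x n)‖ := norm_nonneg _
      have h0p : (0:ℝ) ≤ ‖y n - p i n‖ := norm_nonneg _
      nlinarith [h1, h2, ha, hε1, hεpos, h0a, h0p]
    calc ∑ n ∈ Finset.range N, ‖y n - p i n‖ ^ 2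
        ≤ ∑ n ∈ Finset.range N, (‖y n - F (x n)‖ ^ 2 + (3 + 2*R) * ((2:ℝ)^j)⁻¹) :=
          Finset.sum_le_sum fun n _ => hpt n
      _ = (∑ n ∈ Finset.range N, ‖y n - F (x n)‖ ^ 2)
            + (N:ℝ) * ((3 + 2*R) * ((2:ℝ)^j)⁻¹) := by
          rw [Finset.sum_add_distrib, Finset.sum_const, Finset.card_range, nsmul_eq_mul]
      _ ≤ (∑ n ∈ Finset.range N, ‖y n - F (x n)‖ ^ 2) + (3 + 2 * R) := by
          have : (N:ℝ) * ((3 + 2*R) * ((2:ℝ)^j)⁻¹) = (3 + 2*R) * ((N:ℝ) * ((2:ℝ)^j)⁻¹) := by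
            ring
          rw [this]
          have h4 : (3 + 2*R) * ((N:ℝ) * ((2:ℝ)^j)⁻¹) ≤ (3 + 2*R) * 1 :=
            mul_le_mul_of_nonneg_left hNε (by linarith)
          linarith
  -- log of the weight
  have hlogw : Real.log (w i) = -(2 * Real.log ((j:ℝ) + 1) + Real.log ((S j).card : ℝ)) := by
    show Real.log ((((j:ℝ) + 1) ^ 2 * ((S j).card : ℝ))⁻¹) = _
    rw [Real.log_inv, Real.log_mul (by positivity) (ne_of_gt (hcardpos j)), Real.log_pow]
    push_cast
    ring
  -- entropy bound at scale j
  have hcard := hEnt j hj1 hjj₁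
  -- final numeric assembly
  have hlogj : Real.log ((j:ℝ) + 1) ≤ Real.log (t + 2) :=
    Real.log_le_log (by positivity) (by linarith)
  have hrp : (j:ℝ) ^ M ≤ (t + 1) ^ M :=
    Real.rpow_le_rpow (by positivity) (by linarith) (le_of_lt hM)
  have hlog2pos : (0:ℝ) < Real.log 2 := Real.log_pos one_lt_two
  have hmono : 2 * L * (j:ℝ) ^ M * Real.log 2 ≤ 2 * L * (t+1) ^ M * Real.log 2 := by
    exact mul_le_mul_of_nonneg_right
      (mul_le_mul_of_nonneg_left hrp (by positivity : (0:ℝ) ≤ 2 * L)) hlog2pos.le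
  have hmain : ∑ n ∈ Finset.range N, ‖y n - ewaPred w p y n‖ ^ 2 ≤
      ∑ n ∈ Finset.range N, ‖y n - F (x n)‖ ^ 2 + 100 * L * t ^ M := by
    calc ∑ n ∈ Finset.range N, ‖y n - ewaPred w p y n‖ ^ 2
      ≤ (∑ n ∈ Finset.range N, ‖y n - p i n‖ ^ 2)
          + 8 * (Real.log W₀ - Real.log (w i)) := hcore N i
      _ ≤ (∑ n ∈ Finset.range N, ‖y n - F (x n)‖ ^ 2) + (3 + 2 * R)
          + 8 * (Real.log W₀ + 2 * Real.log ((j:ℝ) + 1) + Real.log ((S j).card : ℝ)) := by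
        rw [hlogw]
        linarith [hcomp]
      _ ≤ (∑ n ∈ Finset.range N, ‖y n - F (x n)‖ ^ 2) + 100 * L * t ^ M := by
        have hstep : (3 + 2 * R) + 8 * (Real.log W₀ + 2 * Real.log ((j:ℝ) + 1)
            + Real.log ((S j).card : ℝ)) ≤
            K₀ + 16 * Real.log (t + 2) + 16 * Real.log 2 * L * (t + 1) ^ M := by
          rw [hK₀def]
          have h8 : 8 * Real.log ((S j).card : ℝ) ≤ 8 * (2 * L * (t+1) ^ M * Real.log 2) := by
            linarith [hcard, hmono]
          have h9 : 8 * (2 * L * (t+1) ^ M * Real.log 2) = 16 * Real.log 2 * L * (t+1) ^ M := by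
            ring
          linarith [hlogj, h8, h9]
        linarith [hnum, hstep]
  simp only [hpred]
  exact hmain
end
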